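/- arXiv:2009.06991 — 3 statements merged into one kernel-verified Lean document; each statement's English description precedes it below -/
import Mathlib

section
/- (Lagrange multiplier bound) Let f : [0,1] → ℝ^d be a smooth immersed curve with f(0) = p₀, f(1) = p₁, length ℓ = L(f) satisfying |p₁ − p₀| < ℓ. Suppose that the normal velocity satisfies ∂ₜ^⊥f = −∇ₛ²κ − (1/2)|κ|²κ + λκ for a constant λ ∈ ℝ, with the clamped boundary conditions. Then |λ|·(ℓ − |p₁−p₀|) ≤ 2ℓ‖∂ₜ^⊥f‖_{L¹(ds)} + ∫|κ|² ds + ∫|∇ₛκ| ds. -/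
open MeasureTheory intervalIntegral
open scoped RealInnerProductSpace

/-- Unit tangent of a curve. -/
noncomputable def utang {d : ℕ} (f : ℝ → EuclideanSpace ℝ (Fin d)) :
    ℝ → EuclideanSpace ℝ (Fin d) := fun x => (‖deriv f x‖)⁻¹ • deriv f x

/-- Arc-length derivative ∂ₛ X = γ⁻¹ ∂ₓ X of a field X along f. -/
noncomputable def sderiv {d : ℕ} (f X : ℝ → EuclideanSpace ℝ (Fin d)) :
    ℝ → EuclideanSpace ℝ (Fin d) := fun x => (‖deriv f x‖)⁻¹ • deriv X x

/-- Curvature vector κ = ∂ₛ²f. -/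
noncomputable def curv {d : ℕ} (f : ℝ → EuclideanSpace ℝ (Fin d)) :
    ℝ → EuclideanSpace ℝ (Fin d) := sderiv f (utang f)

/-- Normal connection ∇ₛ X = ∂ₛ X − ⟪∂ₛ X, ∂ₛ f⟫ ∂ₛ f along f. -/
noncomputable def nablaS {d : ℕ} (f X : ℝ → EuclideanSpace ℝ (Fin d)) :
    ℝ → EuclideanSpace ℝ (Fin d) :=
  fun x => sderiv f X x - ⟪sderiv f X x, utang f x⟫ • utang f x

/-- Elastic energy E(f) = (1/2)∫₀¹ |κ|² γ dx. -/
noncomputable def elasticEnergy {d : ℕ} (f : ℝ → EuclideanSpace ℝ (Fin d)) : ℝ :=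
  (1/2) * ∫ x in (0:ℝ)..1, ‖curv f x‖^2 * ‖deriv f x‖

/-- Length L(f) = ∫₀¹ γ dx. -/
noncomputable def curveLength {d : ℕ} (f : ℝ → EuclideanSpace ℝ (Fin d)) : ℝ :=
  ∫ x in (0:ℝ)..1, ‖deriv f x‖

/-- L²(ds)-gradient of the elastic energy: ∇E(f) = ∇ₛ²κ + (1/2)|κ|²κ. -/
noncomputable def gradE {d : ℕ} (f : ℝ → EuclideanSpace ℝ (Fin d)) :
    ℝ → EuclideanSpace ℝ (Fin d) :=
  fun x => nablaS f (nablaS f (curv f)) x + ((1/2) * ‖curv f x‖^2) • curv f x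

/-- Lagrange multiplier λ(f) = (∫⟪∇E(f), κ⟫ ds)/(∫|κ|² ds). -/
noncomputable def lam {d : ℕ} (f : ℝ → EuclideanSpace ℝ (Fin d)) : ℝ :=
  (∫ x in (0:ℝ)..1, ⟪gradE f x, curv f x⟫ * ‖deriv f x‖) /
    (∫ x in (0:ℝ)..1, ‖curv f x‖^2 * ‖deriv f x‖)

section Stmt7Aux

variable {d : ℕ} {f X : ℝ → EuclideanSpace ℝ (Fin d)}

lemma gam_pos (himm : ∀ x, deriv f x ≠ 0) (x : ℝ) : 0 < ‖deriv f x‖ :=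
  norm_pos_iff.mpr (himm x)

lemma gam_ne (himm : ∀ x, deriv f x ≠ 0) (x : ℝ) : ‖deriv f x‖ ≠ 0 :=
  (gam_pos himm x).ne'

lemma df_smooth (hf : ContDiff ℝ (⊤:ℕ∞) f) : ContDiff ℝ (⊤:ℕ∞) (deriv f) :=
  (contDiff_infty_iff_deriv.mp hf).2

lemma gam_smooth (hf : ContDiff ℝ (⊤:ℕ∞) f) (himm : ∀ x, deriv f x ≠ 0) :
    ContDiff ℝ (⊤:ℕ∞) (fun x => ‖deriv f x‖) := by
  rw [contDiff_iff_contDiffAt]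
  intro x
  exact ContDiffAt.norm ℝ (df_smooth hf).contDiffAt (himm x)

lemma gaminv_smooth (hf : ContDiff ℝ (⊤:ℕ∞) f) (himm : ∀ x, deriv f x ≠ 0) :
    ContDiff ℝ (⊤:ℕ∞) (fun x => (‖deriv f x‖)⁻¹) :=
  (gam_smooth hf himm).inv (fun x => gam_ne himm x)

lemma utang_smooth (hf : ContDiff ℝ (⊤:ℕ∞) f) (himm : ∀ x, deriv f x ≠ 0) :
    ContDiff ℝ (⊤:ℕ∞) (utang f) :=
  (gaminv_smooth hf himm).smul (df_smooth hf)

lemma sderiv_smooth (hf : ContDiff ℝ (⊤:ℕ∞) f) (himm : ∀ x, deriv f x ≠ 0)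
    (hX : ContDiff ℝ (⊤:ℕ∞) X) : ContDiff ℝ (⊤:ℕ∞) (sderiv f X) :=
  (gaminv_smooth hf himm).smul (contDiff_infty_iff_deriv.mp hX).2

lemma curv_smooth (hf : ContDiff ℝ (⊤:ℕ∞) f) (himm : ∀ x, deriv f x ≠ 0) :
    ContDiff ℝ (⊤:ℕ∞) (curv f) :=
  sderiv_smooth hf himm (utang_smooth hf himm)

lemma nablaS_smooth (hf : ContDiff ℝ (⊤:ℕ∞) f) (himm : ∀ x, deriv f x ≠ 0)
    (hX : ContDiff ℝ (⊤:ℕ∞) X) : ContDiff ℝ (⊤:ℕ∞) (nablaS f X) :=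
  (sderiv_smooth hf himm hX).sub
    ((ContDiff.inner ℝ (sderiv_smooth hf himm hX) (utang_smooth hf himm)).smul
      (utang_smooth hf himm))

lemma utang_norm (himm : ∀ x, deriv f x ≠ 0) (x : ℝ) : ‖utang f x‖ = 1 := by
  simp only [utang, norm_smul, norm_inv, norm_norm]
  exact inv_mul_cancel₀ (gam_ne himm x)

lemma inner_utang_self (himm : ∀ x, deriv f x ≠ 0) (x : ℝ) :
    ⟪utang f x, utang f x⟫ = 1 := by
  rw [real_inner_self_eq_norm_sq, utang_norm himm]; norm_num

lemma deriv_f_eq (himm : ∀ x, deriv f x ≠ 0) (x : ℝ) :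
    deriv f x = ‖deriv f x‖ • utang f x := by
  simp only [utang, smul_smul, mul_inv_cancel₀ (gam_ne himm x), one_smul]

lemma deriv_utang (himm : ∀ x, deriv f x ≠ 0) (x : ℝ) :
    deriv (utang f) x = ‖deriv f x‖ • curv f x := by
  simp only [curv, sderiv, smul_smul, mul_inv_cancel₀ (gam_ne himm x), one_smul]

lemma hasDerivAt_utang (hf : ContDiff ℝ (⊤:ℕ∞) f) (himm : ∀ x, deriv f x ≠ 0) (x : ℝ) :
    HasDerivAt (utang f) (‖deriv f x‖ • curv f x) x := by
  rw [← deriv_utang himm]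
  exact ((utang_smooth hf himm).differentiable (by simp)).differentiableAt.hasDerivAt

lemma hasDerivAt_curv (hf : ContDiff ℝ (⊤:ℕ∞) f) (himm : ∀ x, deriv f x ≠ 0) (x : ℝ) :
    HasDerivAt (curv f) (deriv (curv f) x) x :=
  ((curv_smooth hf himm).differentiable (by simp)).differentiableAt.hasDerivAt

lemma inner_curv_utang (hf : ContDiff ℝ (⊤:ℕ∞) f) (himm : ∀ x, deriv f x ≠ 0) (x : ℝ) :
    ⟪curv f x, utang f x⟫ = 0 := by
  have h1 : HasDerivAt (fun y => ⟪utang f y, utang f y⟫)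
      (⟪utang f x, ‖deriv f x‖ • curv f x⟫ + ⟪‖deriv f x‖ • curv f x, utang f x⟫) x :=
    HasDerivAt.inner ℝ (hasDerivAt_utang hf himm x) (hasDerivAt_utang hf himm x)
  have h2 : (fun y => ⟪utang f y, utang f y⟫) = fun _ => (1:ℝ) := by
    funext y; exact inner_utang_self himm y
  rw [h2] at h1
  have h3 := (hasDerivAt_const x (1:ℝ)).unique h1
  rw [real_inner_smul_right, real_inner_smul_left, real_inner_comm] at h3
  have h4 : ‖deriv f x‖ * (2 * ⟪curv f x, utang f x⟫) = 0 := by linarith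
  rcases mul_eq_zero.mp h4 with h | h
  · exact absurd h (gam_ne himm x)
  · linarith

lemma inner_deriv_curv_utang (hf : ContDiff ℝ (⊤:ℕ∞) f) (himm : ∀ x, deriv f x ≠ 0) (x : ℝ) :
    ⟪deriv (curv f) x, utang f x⟫ = -(‖deriv f x‖ * ‖curv f x‖^2) := by
  have h1 : HasDerivAt (fun y => ⟪curv f y, utang f y⟫)
      (⟪curv f x, ‖deriv f x‖ • curv f x⟫ + ⟪deriv (curv f) x, utang f x⟫) x :=
    HasDerivAt.inner ℝ (hasDerivAt_curv hf himm x) (hasDerivAt_utang hf himm x)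
  have h2 : (fun y => ⟪curv f y, utang f y⟫) = fun _ => (0:ℝ) := by
    funext y; exact inner_curv_utang hf himm y
  rw [h2] at h1
  have h3 := (hasDerivAt_const x (0:ℝ)).unique h1
  rw [real_inner_smul_right, real_inner_self_eq_norm_sq] at h3
  linarith

lemma nablaS_curv_eq (hf : ContDiff ℝ (⊤:ℕ∞) f) (himm : ∀ x, deriv f x ≠ 0) (x : ℝ) :
    nablaS f (curv f) x
      = (‖deriv f x‖)⁻¹ • deriv (curv f) x + (‖curv f x‖^2) • utang f x := by
  have key : ⟪(‖deriv f x‖)⁻¹ • deriv (curv f) x, utang f x⟫ = -‖curv f x‖^2 := by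
    rw [real_inner_smul_left, inner_deriv_curv_utang hf himm]
    field_simp [gam_ne himm x]
  simp only [nablaS, sderiv, key, neg_smul, sub_neg_eq_add]

lemma inner_nablaS_utang (himm : ∀ x, deriv f x ≠ 0) (x : ℝ) :
    ⟪nablaS f X x, utang f x⟫ = 0 := by
  simp only [nablaS, inner_sub_left, real_inner_smul_left, inner_utang_self himm, mul_one,
    sub_self]

end Stmt7Aux

section KeyDeriv

variable {d : ℕ} {f : ℝ → EuclideanSpace ℝ (Fin d)}

lemma hasDerivAt_W (hf : ContDiff ℝ (⊤:ℕ∞) f) (himm : ∀ x, deriv f x ≠ 0) (x : ℝ) :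
    HasDerivAt (fun y => nablaS f (curv f) y + ((1/2) * ‖curv f y‖^2) • utang f y)
      (‖deriv f x‖ • gradE f x) x := by
  have hκ' : ContDiff ℝ (⊤:ℕ∞) (deriv (curv f)) :=
    (contDiff_infty_iff_deriv.mp (curv_smooth hf himm)).2
  have hPfun : ContDiff ℝ (⊤:ℕ∞) (fun y => (‖deriv f y‖)⁻¹ • deriv (curv f) y) :=
    (gaminv_smooth hf himm).smul hκ'
  set P := deriv (fun y => (‖deriv f y‖)⁻¹ • deriv (curv f) y) x with hPdef
  have hP : HasDerivAt (fun y => (‖deriv f y‖)⁻¹ • deriv (curv f) y) P x :=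
    (hPfun.differentiable (by simp)).differentiableAt.hasDerivAt
  set q := (2:ℝ) * ⟪deriv (curv f) x, curv f x⟫ with hqdef
  have hq : HasDerivAt (fun y => ‖curv f y‖^2) q x := by
    have h1 : HasDerivAt (fun y => ⟪curv f y, curv f y⟫)
        (⟪curv f x, deriv (curv f) x⟫ + ⟪deriv (curv f) x, curv f x⟫) x :=
      HasDerivAt.inner ℝ (hasDerivAt_curv hf himm x) (hasDerivAt_curv hf himm x)
    have h2 : (fun y => ⟪curv f y, curv f y⟫) = fun y => ‖curv f y‖^2 :=
      funext fun y => real_inner_self_eq_norm_sq _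
    rw [h2] at h1
    convert h1 using 1
    rw [hqdef, real_inner_comm (deriv (curv f) x) (curv f x)]
    ring
  have hT := hasDerivAt_utang hf himm x
  have hPT : ⟪P, utang f x⟫ = -(3/2) * q := by
    have h1 : HasDerivAt (fun y => ⟪(‖deriv f y‖)⁻¹ • deriv (curv f) y, utang f y⟫)
        (⟪(‖deriv f x‖)⁻¹ • deriv (curv f) x, ‖deriv f x‖ • curv f x⟫ + ⟪P, utang f x⟫) x :=
      HasDerivAt.inner ℝ hP hT
    have h2 : (fun y => ⟪(‖deriv f y‖)⁻¹ • deriv (curv f) y, utang f y⟫)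
        = fun y => -‖curv f y‖^2 := by
      funext y
      rw [real_inner_smul_left, inner_deriv_curv_utang hf himm]
      field_simp [gam_ne himm y]
    rw [h2] at h1
    have h3 := (hq.neg).unique h1
    rw [real_inner_smul_left, real_inner_smul_right] at h3
    rw [hqdef] at h3 ⊢
    have hγ := gam_ne himm x
    field_simp at h3 ⊢
    linarith
  have hN : HasDerivAt (nablaS f (curv f))
      (P + ((‖curv f x‖^2) • (‖deriv f x‖ • curv f x) + q • utang f x)) x := by
    have hNfun : nablaS f (curv f)
        = fun y => (‖deriv f y‖)⁻¹ • deriv (curv f) y + (‖curv f y‖^2) • utang f y :=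
      funext (nablaS_curv_eq hf himm)
    rw [hNfun]
    exact hP.add (hq.smul hT)
  have hW : HasDerivAt
      (fun y => ((‖deriv f y‖)⁻¹ • deriv (curv f) y) + ((3/2) * ‖curv f y‖^2) • utang f y)
      (P + (((3/2) * ‖curv f x‖^2) • (‖deriv f x‖ • curv f x) + ((3/2) * q) • utang f x)) x :=
    hP.add ((hq.const_mul ((3:ℝ)/2)).smul hT)
  have hfun : (fun y => nablaS f (curv f) y + ((1/2) * ‖curv f y‖^2) • utang f y)
      = (fun y => ((‖deriv f y‖)⁻¹ • deriv (curv f) y) + ((3/2) * ‖curv f y‖^2) • utang f y) := by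
    funext y
    rw [nablaS_curv_eq hf himm y]
    module
  rw [hfun]
  convert hW using 1
  have hDinner : ⟪deriv (nablaS f (curv f)) x, utang f x⟫ = -(1/2) * q := by
    rw [hN.deriv]
    rw [inner_add_left, inner_add_left, real_inner_smul_left, real_inner_smul_left,
      real_inner_smul_left, inner_curv_utang hf himm, inner_utang_self himm, hPT]
    ring
  simp only [gradE]
  rw [show nablaS f (nablaS f (curv f)) x
      = sderiv f (nablaS f (curv f)) x
        - ⟪sderiv f (nablaS f (curv f)) x, utang f x⟫ • utang f x from rfl]
  simp only [sderiv]
  rw [real_inner_smul_left, hDinner, hN.deriv]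
  have hγ := gam_ne himm x
  match_scalars <;> field_simp <;> ring
end KeyDeriv

section MoreAux
variable {d : ℕ} {f : ℝ → EuclideanSpace ℝ (Fin d)}

lemma normsq_curv_smooth (hf : ContDiff ℝ (⊤:ℕ∞) f) (himm : ∀ x, deriv f x ≠ 0) :
    ContDiff ℝ (⊤:ℕ∞) (fun x => ‖curv f x‖^2) := by
  have h : (fun x => ‖curv f x‖^2) = fun x => ⟪curv f x, curv f x⟫ :=
    funext fun x => (real_inner_self_eq_norm_sq _).symm
  rw [h]
  exact ContDiff.inner ℝ (curv_smooth hf himm) (curv_smooth hf himm)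

lemma gradE_smooth (hf : ContDiff ℝ (⊤:ℕ∞) f) (himm : ∀ x, deriv f x ≠ 0) :
    ContDiff ℝ (⊤:ℕ∞) (gradE f) :=
  (nablaS_smooth hf himm (nablaS_smooth hf himm (curv_smooth hf himm))).add
    ((contDiff_const.mul (normsq_curv_smooth hf himm)).smul (curv_smooth hf himm))

lemma W_smooth (hf : ContDiff ℝ (⊤:ℕ∞) f) (himm : ∀ x, deriv f x ≠ 0) :
    ContDiff ℝ (⊤:ℕ∞)
      (fun y => nablaS f (curv f) y + ((1/2) * ‖curv f y‖^2) • utang f y) :=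
  (nablaS_smooth hf himm (curv_smooth hf himm)).add
    ((contDiff_const.mul (normsq_curv_smooth hf himm)).smul (utang_smooth hf himm))

end MoreAux

theorem stmt7 {d : ℕ} (f V : ℝ → EuclideanSpace ℝ (Fin d)) (lamc : ℝ)
    (p₀ p₁ τ₀ τ₁ : EuclideanSpace ℝ (Fin d))
    (hf : ContDiff ℝ (⊤ : ℕ∞) f)
    (himm : ∀ x : ℝ, deriv f x ≠ 0)
    (h0 : f 0 = p₀) (h1 : f 1 = p₁)
    (htan0 : utang f 0 = τ₀) (htan1 : utang f 1 = τ₁)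
    (hlen : ‖p₁ - p₀‖ < curveLength f)
    (hV : ∀ x ∈ Set.Icc (0:ℝ) 1,
      V x = -nablaS f (nablaS f (curv f)) x
              - ((1/2) * ‖curv f x‖^2) • curv f x + lamc • curv f x) :
    |lamc| * (curveLength f - ‖p₁ - p₀‖)
      ≤ 2 * curveLength f * (∫ x in (0:ℝ)..1, ‖V x‖ * ‖deriv f x‖)
        + (∫ x in (0:ℝ)..1, ‖curv f x‖^2 * ‖deriv f x‖)
        + ∫ x in (0:ℝ)..1, ‖nablaS f (curv f) x‖ * ‖deriv f x‖ := by
  have hf' : ContDiff ℝ (⊤:ℕ∞) f := hf.of_le (by simp)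
  set ℓ := curveLength f with hℓdef
  have hℓpos : 0 < ℓ := lt_of_le_of_lt (norm_nonneg _) hlen
  -- continuity facts
  have hγc : Continuous (fun x => ‖deriv f x‖) := (gam_smooth hf' himm).continuous
  have hTc : Continuous (utang f) := (utang_smooth hf' himm).continuous
  have hκc : Continuous (curv f) := (curv_smooth hf' himm).continuous
  have hNc : Continuous (nablaS f (curv f)) :=
    (nablaS_smooth hf' himm (curv_smooth hf' himm)).continuous
  have hWcc : Continuous
      (fun y => nablaS f (curv f) y + ((1/2) * ‖curv f y‖^2) • utang f y) :=
    (W_smooth hf' himm).continuous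
  have hGc : Continuous (gradE f) := (gradE_smooth hf' himm).continuous
  -- arclength function
  set s : ℝ → ℝ := fun x => ∫ t in (0:ℝ)..x, ‖deriv f t‖ with hsdef
  have hs : ∀ x : ℝ, HasDerivAt s ‖deriv f x‖ x := by
    intro x
    exact intervalIntegral.integral_hasDerivAt_right
      (hγc.intervalIntegrable 0 x)
      (hγc.stronglyMeasurableAtFilter _ _)
      hγc.continuousAt
  have hsc : Continuous s := by
    rw [continuous_iff_continuousAt]
    exact fun x => (hs x).continuousAt
  have hs0 : s 0 = 0 := intervalIntegral.integral_same
  have hs1 : s 1 = ℓ := rfl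
  -- the comparison segment and u = f - l
  set e : EuclideanSpace ℝ (Fin d) := ℓ⁻¹ • (p₁ - p₀) with hedef
  have hecirc : ‖e‖ * ℓ = ‖p₁ - p₀‖ := by
    rw [hedef, norm_smul, Real.norm_eq_abs, abs_of_pos (inv_pos.mpr hℓpos)]
    field_simp
  have he1 : ‖e‖ ≤ 1 := by
    rw [← mul_le_mul_iff_of_pos_right hℓpos, hecirc, one_mul]
    exact hlen.le
  set u : ℝ → EuclideanSpace ℝ (Fin d) :=
    fun x => f x - p₀ - (s x * ℓ⁻¹) • (p₁ - p₀) with hudef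
  have hu0 : u 0 = 0 := by simp [hudef, hs0, h0]
  have hu1 : u 1 = 0 := by
    simp [hudef, hs1, h1, inv_mul_cancel₀ hℓpos.ne', mul_comm ℓ ℓ⁻¹]
  have hu' : ∀ x : ℝ, HasDerivAt u (‖deriv f x‖ • (utang f x - e)) x := by
    intro x
    have h1 : HasDerivAt f (deriv f x) x :=
      ((hf'.differentiable (by simp)).differentiableAt).hasDerivAt
    have h2 : HasDerivAt (fun y => (s y * ℓ⁻¹) • (p₁ - p₀))
        ((‖deriv f x‖ * ℓ⁻¹) • (p₁ - p₀)) x :=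
      (((hs x).mul_const ℓ⁻¹)).smul_const (p₁ - p₀)
    have h3 := (h1.sub_const p₀).sub h2
    have h4 : ‖deriv f x‖ • (utang f x - e)
        = deriv f x - (‖deriv f x‖ * ℓ⁻¹) • (p₁ - p₀) := by
      rw [hedef, smul_sub, smul_smul]
      congr 1
      exact (deriv_f_eq himm x).symm
    rw [h4]
    exact h3
  have hucont : Continuous u :=
    (hf'.continuous.sub continuous_const).sub
      ((hsc.mul continuous_const).smul continuous_const)
  -- integration by parts
  have ibp : ∀ (W W' : ℝ → EuclideanSpace ℝ (Fin d)),
      (∀ x, HasDerivAt W (W' x) x) → Continuous W → Continuous W' →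
      (∫ x in (0:ℝ)..1, (⟪W x, ‖deriv f x‖ • (utang f x - e)⟫ + ⟪W' x, u x⟫)) = 0 := by
    intro W W' hW hWc hW'c
    have hint : IntervalIntegrable
        (fun x => (⟪W x, ‖deriv f x‖ • (utang f x - e)⟫ + ⟪W' x, u x⟫)) volume 0 1 := by
      apply Continuous.intervalIntegrable
      exact (hWc.inner (hγc.smul (hTc.sub continuous_const))).add (hW'c.inner hucont)
    have h : ∀ x ∈ Set.uIcc (0:ℝ) 1,
        HasDerivAt (fun y => ⟪W y, u y⟫)
          (⟪W x, ‖deriv f x‖ • (utang f x - e)⟫ + ⟪W' x, u x⟫) x :=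
      fun x _ => HasDerivAt.inner ℝ (hW x) (hu' x)
    rw [intervalIntegral.integral_eq_sub_of_hasDerivAt h hint, hu0, hu1]
    simp
  -- two IBP identities
  have eq1 := ibp (fun y => nablaS f (curv f) y + ((1/2) * ‖curv f y‖^2) • utang f y)
    (fun x => ‖deriv f x‖ • gradE f x) (hasDerivAt_W hf' himm) hWcc (hγc.smul hGc)
  have eq2 := ibp (utang f) (fun x => ‖deriv f x‖ • curv f x)
    (hasDerivAt_utang hf' himm) hTc (hγc.smul hκc)
  -- rewrite first integrand of eq2
  have hIA : (fun x => ⟪utang f x, ‖deriv f x‖ • (utang f x - e)⟫)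
      = fun x => (1 - ⟪utang f x, e⟫) * ‖deriv f x‖ := by
    funext x
    rw [real_inner_smul_right, inner_sub_right, inner_utang_self himm]
    ring
  set I1 : ℝ := ∫ x in (0:ℝ)..1, (1 - ⟪utang f x, e⟫) * ‖deriv f x‖ with hI1def
  have intTA : IntervalIntegrable
      (fun x => ⟪utang f x, ‖deriv f x‖ • (utang f x - e)⟫) volume 0 1 :=
    (hTc.inner (hγc.smul (hTc.sub continuous_const))).intervalIntegrable 0 1
  have intKU : IntervalIntegrable
      (fun x => ⟪‖deriv f x‖ • curv f x, u x⟫) volume 0 1 :=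
    ((hγc.smul hκc).inner hucont).intervalIntegrable 0 1
  have e2 : (∫ x in (0:ℝ)..1, ⟪‖deriv f x‖ • curv f x, u x⟫) = -I1 := by
    rw [intervalIntegral.integral_add intTA intKU] at eq2
    rw [hIA] at eq2
    linarith
  have intWA : IntervalIntegrable
      (fun x => ⟪nablaS f (curv f) x + ((1/2) * ‖curv f x‖^2) • utang f x,
        ‖deriv f x‖ • (utang f x - e)⟫) volume 0 1 :=
    (hWcc.inner (hγc.smul (hTc.sub continuous_const))).intervalIntegrable 0 1
  have intGU : IntervalIntegrable
      (fun x => ⟪‖deriv f x‖ • gradE f x, u x⟫) volume 0 1 :=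
    ((hγc.smul hGc).inner hucont).intervalIntegrable 0 1
  have e1 : (∫ x in (0:ℝ)..1, ⟪‖deriv f x‖ • gradE f x, u x⟫)
      = -(∫ x in (0:ℝ)..1, ⟪nablaS f (curv f) x + ((1/2) * ‖curv f x‖^2) • utang f x,
          ‖deriv f x‖ • (utang f x - e)⟫) := by
    rw [intervalIntegral.integral_add intWA intGU] at eq1
    linarith
  -- use the equation for V
  have hVpoint : Set.EqOn (fun x => ⟪V x, u x⟫ * ‖deriv f x‖)
      (fun x => lamc * ⟪‖deriv f x‖ • curv f x, u x⟫ - ⟪‖deriv f x‖ • gradE f x, u x⟫)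
      (Set.uIcc (0:ℝ) 1) := by
    intro x hx
    rw [Set.uIcc_of_le (by norm_num : (0:ℝ) ≤ 1)] at hx
    simp only
    rw [hV x hx]
    simp only [gradE]
    simp only [inner_sub_left, inner_add_left, inner_neg_left, real_inner_smul_left,
      inner_smul_real_left]
    ring
  have intVc1 : IntervalIntegrable
      (fun x => lamc * ⟪‖deriv f x‖ • curv f x, u x⟫) volume 0 1 :=
    (continuous_const.mul ((hγc.smul hκc).inner hucont)).intervalIntegrable 0 1
  have hVint : (∫ x in (0:ℝ)..1, ⟪V x, u x⟫ * ‖deriv f x‖)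
      = lamc * (∫ x in (0:ℝ)..1, ⟪‖deriv f x‖ • curv f x, u x⟫)
        - ∫ x in (0:ℝ)..1, ⟪‖deriv f x‖ • gradE f x, u x⟫ := by
    rw [intervalIntegral.integral_congr hVpoint,
      intervalIntegral.integral_sub intVc1 intGU,
      intervalIntegral.integral_const_mul]
  have key : lamc * I1
      = (∫ x in (0:ℝ)..1, ⟪nablaS f (curv f) x + ((1/2) * ‖curv f x‖^2) • utang f x,
          ‖deriv f x‖ • (utang f x - e)⟫)
        - ∫ x in (0:ℝ)..1, ⟪V x, u x⟫ * ‖deriv f x‖ := by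
    rw [hVint, e1, e2]
    ring
  -- lower bound for I1
  have b_low : ℓ - ‖p₁ - p₀‖ ≤ I1 := by
    have hptw : ∀ x ∈ Set.Icc (0:ℝ) 1,
        (1 - ‖e‖) * ‖deriv f x‖ ≤ (1 - ⟪utang f x, e⟫) * ‖deriv f x‖ := by
      intro x _
      apply mul_le_mul_of_nonneg_right _ (norm_nonneg _)
      have h := real_inner_le_norm (utang f x) e
      rw [utang_norm himm, one_mul] at h
      linarith
    calc ℓ - ‖p₁ - p₀‖ = (1 - ‖e‖) * ℓ := by rw [← hecirc]; ring
      _ = ∫ x in (0:ℝ)..1, (1 - ‖e‖) * ‖deriv f x‖ := by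
          rw [intervalIntegral.integral_const_mul]; rfl
      _ ≤ I1 := by
          apply intervalIntegral.integral_mono_on (by norm_num)
            ((continuous_const.mul hγc).intervalIntegrable 0 1)
            (((continuous_const.sub (hTc.inner continuous_const)).mul
              hγc).intervalIntegrable 0 1) hptw
  -- bound for the W-term
  have intK2 : IntervalIntegrable (fun x => ‖curv f x‖^2 * ‖deriv f x‖) volume 0 1 :=
    (((hκc.norm.pow 2)).mul hγc).intervalIntegrable 0 1
  have intN : IntervalIntegrable (fun x => ‖nablaS f (curv f) x‖ * ‖deriv f x‖) volume 0 1 :=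
    ((hNc.norm).mul hγc).intervalIntegrable 0 1
  have b_W : |∫ x in (0:ℝ)..1, ⟪nablaS f (curv f) x + ((1/2) * ‖curv f x‖^2) • utang f x,
        ‖deriv f x‖ • (utang f x - e)⟫|
      ≤ (∫ x in (0:ℝ)..1, ‖curv f x‖^2 * ‖deriv f x‖)
        + ∫ x in (0:ℝ)..1, ‖nablaS f (curv f) x‖ * ‖deriv f x‖ := by
    have hptw : ∀ x ∈ Set.Icc (0:ℝ) 1,
        |⟪nablaS f (curv f) x + ((1/2) * ‖curv f x‖^2) • utang f x,
          ‖deriv f x‖ • (utang f x - e)⟫|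
        ≤ (‖curv f x‖^2 + ‖nablaS f (curv f) x‖) * ‖deriv f x‖ := by
      intro x _
      rw [real_inner_smul_right, abs_mul, abs_of_nonneg (norm_nonneg (deriv f x)),
        mul_comm]
      apply mul_le_mul_of_nonneg_right _ (norm_nonneg _)
      rw [inner_sub_right]
      have hWT : ⟪nablaS f (curv f) x + ((1/2) * ‖curv f x‖^2) • utang f x, utang f x⟫
          = (1/2) * ‖curv f x‖^2 := by
        rw [inner_add_left, inner_nablaS_utang himm, real_inner_smul_left,
          inner_utang_self himm]
        ring
      rw [hWT]
      have hWe : |⟪nablaS f (curv f) x + ((1/2) * ‖curv f x‖^2) • utang f x, e⟫|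
          ≤ ‖nablaS f (curv f) x‖ + (1/2) * ‖curv f x‖^2 := by
        calc |⟪nablaS f (curv f) x + ((1/2) * ‖curv f x‖^2) • utang f x, e⟫|
            ≤ ‖nablaS f (curv f) x + ((1/2) * ‖curv f x‖^2) • utang f x‖ * ‖e‖ :=
              abs_real_inner_le_norm _ _
          _ ≤ ‖nablaS f (curv f) x + ((1/2) * ‖curv f x‖^2) • utang f x‖ * 1 := by
              apply mul_le_mul_of_nonneg_left he1 (norm_nonneg _)
          _ ≤ ‖nablaS f (curv f) x‖ + (1/2) * ‖curv f x‖^2 := by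
              rw [mul_one]
              refine (norm_add_le _ _).trans ?_
              rw [norm_smul, utang_norm himm, Real.norm_eq_abs, mul_one]
              have : |(1:ℝ)/2 * ‖curv f x‖^2| = 1/2 * ‖curv f x‖^2 :=
                abs_of_nonneg (by positivity)
              rw [this]
      have habs := abs_sub ((1:ℝ)/2 * ‖curv f x‖^2)
        (⟪nablaS f (curv f) x + ((1/2) * ‖curv f x‖^2) • utang f x, e⟫)
      have h1 : |(1:ℝ)/2 * ‖curv f x‖^2| = 1/2 * ‖curv f x‖^2 :=
        abs_of_nonneg (by positivity)
      calc |(1:ℝ)/2 * ‖curv f x‖^2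
            - ⟪nablaS f (curv f) x + ((1/2) * ‖curv f x‖^2) • utang f x, e⟫|
          ≤ |(1:ℝ)/2 * ‖curv f x‖^2|
            + |⟪nablaS f (curv f) x + ((1/2) * ‖curv f x‖^2) • utang f x, e⟫| :=
            abs_sub _ _
        _ ≤ ‖curv f x‖^2 + ‖nablaS f (curv f) x‖ := by rw [h1]; linarith [hWe]
    calc |∫ x in (0:ℝ)..1, ⟪nablaS f (curv f) x + ((1/2) * ‖curv f x‖^2) • utang f x,
          ‖deriv f x‖ • (utang f x - e)⟫|
        ≤ ∫ x in (0:ℝ)..1, |⟪nablaS f (curv f) x + ((1/2) * ‖curv f x‖^2) • utang f x,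
            ‖deriv f x‖ • (utang f x - e)⟫| :=
          intervalIntegral.abs_integral_le_integral_abs (by norm_num)
      _ ≤ ∫ x in (0:ℝ)..1, (‖curv f x‖^2 + ‖nablaS f (curv f) x‖) * ‖deriv f x‖ := by
          apply intervalIntegral.integral_mono_on (by norm_num)
            ((hWcc.inner (hγc.smul (hTc.sub continuous_const))).abs.intervalIntegrable 0 1)
            ((((hκc.norm.pow 2).add hNc.norm).mul hγc).intervalIntegrable 0 1) hptw
      _ = (∫ x in (0:ℝ)..1, ‖curv f x‖^2 * ‖deriv f x‖)
          + ∫ x in (0:ℝ)..1, ‖nablaS f (curv f) x‖ * ‖deriv f x‖ := by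
          rw [← intervalIntegral.integral_add intK2 intN]
          congr 1
          funext x
          ring
  -- bound for ‖u‖
  have hub : ∀ x ∈ Set.Icc (0:ℝ) 1, ‖u x‖ ≤ 2 * ℓ := by
    rintro x ⟨hx0, hx1⟩
    have hℓeq : ℓ = ∫ t in (0:ℝ)..1, ‖deriv f t‖ := rfl
    have hs_nonneg : 0 ≤ s x :=
      intervalIntegral.integral_nonneg hx0 (fun t _ => norm_nonneg _)
    have hsl : s x ≤ ℓ := by
      have hadj : (∫ t in (0:ℝ)..x, ‖deriv f t‖) + ∫ t in x..1, ‖deriv f t‖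
          = ∫ t in (0:ℝ)..1, ‖deriv f t‖ :=
        intervalIntegral.integral_add_adjacent_intervals
          (hγc.intervalIntegrable 0 x) (hγc.intervalIntegrable x 1)
      have h2 : 0 ≤ ∫ t in x..1, ‖deriv f t‖ :=
        intervalIntegral.integral_nonneg hx1 (fun t _ => norm_nonneg _)
      have hseq : s x = ∫ t in (0:ℝ)..x, ‖deriv f t‖ := rfl
      rw [hℓeq, ← hadj, ← hseq]
      linarith
    have hfd : ‖f x - p₀‖ ≤ s x := by
      have hftc : ∫ t in (0:ℝ)..x, deriv f t = f x - f 0 := by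
        apply intervalIntegral.integral_eq_sub_of_hasDerivAt
          (fun t _ => ((hf'.differentiable (by simp)).differentiableAt).hasDerivAt)
        exact ((df_smooth hf').continuous).intervalIntegrable 0 x
      rw [← h0, ← hftc]
      exact intervalIntegral.norm_integral_le_integral_norm hx0
    have hsm : ‖(s x * ℓ⁻¹) • (p₁ - p₀)‖ ≤ s x := by
      rw [norm_smul, Real.norm_eq_abs, abs_of_nonneg (by positivity)]
      have h5 : s x * ℓ⁻¹ * ‖p₁ - p₀‖ ≤ s x * ℓ⁻¹ * ℓ :=
        mul_le_mul_of_nonneg_left hlen.le (by positivity)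
      have h6 : s x * ℓ⁻¹ * ℓ = s x := by field_simp
      linarith
    have : ‖u x‖ ≤ ‖f x - p₀‖ + ‖(s x * ℓ⁻¹) • (p₁ - p₀)‖ := norm_sub_le _ _
    linarith
  -- bound for the V-term
  set Vc : ℝ → EuclideanSpace ℝ (Fin d) := fun x => lamc • curv f x - gradE f x with hVcdef
  have hVeq' : Set.EqOn V Vc (Set.uIcc (0:ℝ) 1) := by
    intro x hx
    rw [Set.uIcc_of_le (by norm_num : (0:ℝ) ≤ 1)] at hx
    rw [hV x hx, hVcdef]
    simp only [gradE]
    module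
  have hVcc : Continuous Vc :=
    Continuous.sub (f := fun x => lamc • curv f x) (g := gradE f) (hκc.const_smul lamc) hGc
  have congr2 : (∫ x in (0:ℝ)..1, ‖V x‖ * ‖deriv f x‖)
      = ∫ x in (0:ℝ)..1, ‖Vc x‖ * ‖deriv f x‖ :=
    intervalIntegral.integral_congr (fun x hx => by rw [hVeq' hx])
  have congr1 : (∫ x in (0:ℝ)..1, ⟪V x, u x⟫ * ‖deriv f x‖)
      = ∫ x in (0:ℝ)..1, ⟪Vc x, u x⟫ * ‖deriv f x‖ :=
    intervalIntegral.integral_congr (fun x hx => by rw [hVeq' hx])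
  have b_V : |∫ x in (0:ℝ)..1, ⟪V x, u x⟫ * ‖deriv f x‖|
      ≤ 2 * ℓ * ∫ x in (0:ℝ)..1, ‖V x‖ * ‖deriv f x‖ := by
    rw [congr1, congr2]
    have hptw : ∀ x ∈ Set.Icc (0:ℝ) 1,
        |⟪Vc x, u x⟫ * ‖deriv f x‖| ≤ 2 * ℓ * (‖Vc x‖ * ‖deriv f x‖) := by
      intro x hx
      rw [abs_mul, abs_of_nonneg (norm_nonneg (deriv f x))]
      have h1 : |⟪Vc x, u x⟫| ≤ ‖Vc x‖ * ‖u x‖ := abs_real_inner_le_norm _ _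
      have h2 := hub x hx
      have h3 : ‖Vc x‖ * ‖u x‖ ≤ ‖Vc x‖ * (2 * ℓ) :=
        mul_le_mul_of_nonneg_left h2 (norm_nonneg _)
      have h4 : |⟪Vc x, u x⟫| * ‖deriv f x‖ ≤ (‖Vc x‖ * (2 * ℓ)) * ‖deriv f x‖ :=
        mul_le_mul_of_nonneg_right (h1.trans h3) (norm_nonneg _)
      calc |⟪Vc x, u x⟫| * ‖deriv f x‖ ≤ (‖Vc x‖ * (2 * ℓ)) * ‖deriv f x‖ := h4
        _ = 2 * ℓ * (‖Vc x‖ * ‖deriv f x‖) := by ring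
    calc |∫ x in (0:ℝ)..1, ⟪Vc x, u x⟫ * ‖deriv f x‖|
        ≤ ∫ x in (0:ℝ)..1, |⟪Vc x, u x⟫ * ‖deriv f x‖| :=
          intervalIntegral.abs_integral_le_integral_abs (by norm_num)
      _ ≤ ∫ x in (0:ℝ)..1, 2 * ℓ * (‖Vc x‖ * ‖deriv f x‖) := by
          apply intervalIntegral.integral_mono_on (by norm_num)
            (((hVcc.inner hucont).mul hγc).abs.intervalIntegrable 0 1)
            ((continuous_const.mul (hVcc.norm.mul hγc)).intervalIntegrable 0 1) hptw
      _ = 2 * ℓ * ∫ x in (0:ℝ)..1, ‖Vc x‖ * ‖deriv f x‖ :=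
          intervalIntegral.integral_const_mul _ _
  -- conclusion
  have hI1pos : 0 ≤ I1 := le_trans (by linarith) b_low
  have final1 : |lamc| * (ℓ - ‖p₁ - p₀‖) ≤ |lamc| * I1 :=
    mul_le_mul_of_nonneg_left b_low (abs_nonneg _)
  have final2 : |lamc| * I1 = |lamc * I1| := by
    rw [abs_mul, abs_of_nonneg hI1pos]
  have final3 : |lamc * I1|
      ≤ ((∫ x in (0:ℝ)..1, ‖curv f x‖^2 * ‖deriv f x‖)
          + ∫ x in (0:ℝ)..1, ‖nablaS f (curv f) x‖ * ‖deriv f x‖)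
        + 2 * ℓ * ∫ x in (0:ℝ)..1, ‖V x‖ * ‖deriv f x‖ := by
    rw [key]
    refine (abs_sub _ _).trans ?_
    exact add_le_add b_W b_V
  linarith
end

section
/- Under the hypotheses of the constant-speed reparametrization estimate, if additionally f evolves by the length-preserving elastic flow (so L(f(t)) = ℓ is constant and E(f(t)) ≤ E(f₀)), then ‖∂ₜf̃(t)‖_{L²(dx)} ≤ C‖∂ₜf(t)‖_{L²(ds)} with the explicit constant C = sqrt(2/ℓ + 16·E(f₀)). -/
open MeasureTheory intervalIntegral
open scoped RealInnerProductSpace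
open Function


variable {E : Type*} [NormedAddCommGroup E] [NormedSpace ℝ E]

/-- partial derivative in first variable -/
noncomputable def PT (F : ℝ → ℝ → E) : ℝ → ℝ → E :=
  fun t x => fderiv ℝ (uncurry F) (t, x) (1, 0)

/-- partial derivative in second variable -/
noncomputable def PX (F : ℝ → ℝ → E) : ℝ → ℝ → E :=
  fun t x => fderiv ℝ (uncurry F) (t, x) (0, 1)

theorem hasDerivAt_PT {F : ℝ → ℝ → E} (hF : ContDiff ℝ (⊤ : ℕ∞) (uncurry F)) (t x : ℝ) :
    HasDerivAt (fun s => F s x) (PT F t x) t := by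
  have h1 : HasDerivAt (fun s : ℝ => (s, x)) ((1:ℝ), (0:ℝ)) t := by
    simpa using (hasDerivAt_id t).prodMk (hasDerivAt_const t x)
  have h2 : HasFDerivAt (uncurry F) (fderiv ℝ (uncurry F) (t, x)) (t, x) :=
    (hF.differentiable (by simp)).differentiableAt.hasFDerivAt
  exact h2.comp_hasDerivAt t h1

theorem hasDerivAt_PX {F : ℝ → ℝ → E} (hF : ContDiff ℝ (⊤ : ℕ∞) (uncurry F)) (t x : ℝ) :
    HasDerivAt (fun y => F t y) (PX F t x) x := by
  have h1 : HasDerivAt (fun y : ℝ => (t, y)) ((0:ℝ), (1:ℝ)) x := by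
    simpa using (hasDerivAt_const x t).prodMk (hasDerivAt_id x)
  have h2 : HasFDerivAt (uncurry F) (fderiv ℝ (uncurry F) (t, x)) (t, x) :=
    (hF.differentiable (by simp)).differentiableAt.hasFDerivAt
  exact h2.comp_hasDerivAt x h1

theorem deriv_PT {F : ℝ → ℝ → E} (hF : ContDiff ℝ (⊤ : ℕ∞) (uncurry F)) (t x : ℝ) :
    deriv (fun s => F s x) t = PT F t x := (hasDerivAt_PT hF t x).deriv

theorem deriv_PX {F : ℝ → ℝ → E} (hF : ContDiff ℝ (⊤ : ℕ∞) (uncurry F)) (t x : ℝ) :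
    deriv (F t) x = PX F t x := (hasDerivAt_PX hF t x).deriv

theorem contDiff_PT {F : ℝ → ℝ → E} (hF : ContDiff ℝ (⊤ : ℕ∞) (uncurry F)) :
    ContDiff ℝ (⊤ : ℕ∞) (uncurry (PT F)) := by
  have h : ContDiff ℝ (⊤ : ℕ∞) (fun p : ℝ × ℝ => fderiv ℝ (uncurry F) p ((1:ℝ), (0:ℝ))) :=
    (hF.fderiv_right (by simp)).clm_apply contDiff_const
  exact h

theorem contDiff_PX {F : ℝ → ℝ → E} (hF : ContDiff ℝ (⊤ : ℕ∞) (uncurry F)) :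
    ContDiff ℝ (⊤ : ℕ∞) (uncurry (PX F)) := by
  have h : ContDiff ℝ (⊤ : ℕ∞) (fun p : ℝ × ℝ => fderiv ℝ (uncurry F) p ((0:ℝ), (1:ℝ))) :=
    (hF.fderiv_right (by simp)).clm_apply contDiff_const
  exact h

theorem hasFDerivAt_applied {F : ℝ → ℝ → E} (hF : ContDiff ℝ (⊤ : ℕ∞) (uncurry F))
    (v : ℝ × ℝ) (q : ℝ × ℝ) :
    HasFDerivAt (fun p => fderiv ℝ (uncurry F) p v)
      ((ContinuousLinearMap.apply ℝ E v).comp (fderiv ℝ (fderiv ℝ (uncurry F)) q)) q := by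
  have h1 : HasFDerivAt (fderiv ℝ (uncurry F)) (fderiv ℝ (fderiv ℝ (uncurry F)) q) q :=
    ((hF.fderiv_right (m := (⊤ : ℕ∞)) (by simp)).differentiable (by simp)).differentiableAt.hasFDerivAt
  exact ((ContinuousLinearMap.apply ℝ E v).hasFDerivAt).comp q h1

theorem clairaut {F : ℝ → ℝ → E} (hF : ContDiff ℝ (⊤ : ℕ∞) (uncurry F)) (t x : ℝ) :
    PX (PT F) t x = PT (PX F) t x := by
  have hsymm := second_derivative_symmetric
    (f := uncurry F) (f' := fderiv ℝ (uncurry F))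
    (f'' := fderiv ℝ (fderiv ℝ (uncurry F)) (t, x)) (x := (t, x))
    (fun y => ((hF.differentiable (by simp)) y).hasFDerivAt)
    (((hF.fderiv_right (m := (⊤ : ℕ∞)) (by simp)).differentiable (by simp)) (t, x)).hasFDerivAt
    ((0:ℝ), (1:ℝ)) ((1:ℝ), (0:ℝ))
  have h1 : PX (PT F) t x
      = (fderiv ℝ (fderiv ℝ (uncurry F)) (t, x)) ((0:ℝ),(1:ℝ)) ((1:ℝ),(0:ℝ)) := by
    have : uncurry (PT F) = fun p => fderiv ℝ (uncurry F) p ((1:ℝ),(0:ℝ)) := rfl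
    unfold PX
    rw [this]
    rw [(hasFDerivAt_applied hF ((1:ℝ),(0:ℝ)) (t,x)).fderiv]
    rfl
  have h2 : PT (PX F) t x
      = (fderiv ℝ (fderiv ℝ (uncurry F)) (t, x)) ((1:ℝ),(0:ℝ)) ((0:ℝ),(1:ℝ)) := by
    have : uncurry (PX F) = fun p => fderiv ℝ (uncurry F) p ((0:ℝ),(1:ℝ)) := rfl
    unfold PT
    rw [this]
    rw [(hasFDerivAt_applied hF ((0:ℝ),(1:ℝ)) (t,x)).fderiv]
    rfl
  rw [h1, h2, hsymm]

theorem my_cauchy_schwarz {a b : ℝ → ℝ} (ha : Continuous a) (hb : Continuous b) :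
    (∫ x in (0:ℝ)..1, a x * b x)
      ≤ Real.sqrt (∫ x in (0:ℝ)..1, (a x)^2) * Real.sqrt (∫ x in (0:ℝ)..1, (b x)^2) := by
  set P := ∫ x in (0:ℝ)..1, (a x)^2 with hP
  set Q := ∫ x in (0:ℝ)..1, (b x)^2 with hQ
  set R := ∫ x in (0:ℝ)..1, a x * b x with hR
  have hPnn : 0 ≤ P := intervalIntegral.integral_nonneg zero_le_one (fun x _ => sq_nonneg _)
  have hQnn : 0 ≤ Q := intervalIntegral.integral_nonneg zero_le_one (fun x _ => sq_nonneg _)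
  have key : ∀ θ : ℝ, 0 ≤ P * (θ * θ) + (2 * R) * θ + Q := by
    intro θ
    have h0 : (0:ℝ) ≤ ∫ x in (0:ℝ)..1, (θ * a x + b x)^2 :=
      intervalIntegral.integral_nonneg zero_le_one (fun x _ => sq_nonneg _)
    have hexp : (∫ x in (0:ℝ)..1, (θ * a x + b x)^2)
        = θ^2 * P + (2*θ) * R + Q := by
      have h1 : (∫ x in (0:ℝ)..1, (θ * a x + b x)^2)
          = ∫ x in (0:ℝ)..1, ((θ^2) * (a x)^2 + ((2*θ) * (a x * b x) + (b x)^2)) := by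
        apply intervalIntegral.integral_congr
        intro x _
        ring
      rw [h1]
      rw [intervalIntegral.integral_add, intervalIntegral.integral_add,
        intervalIntegral.integral_const_mul, intervalIntegral.integral_const_mul]
      · ring
      · exact (continuous_const.mul (ha.mul hb)).intervalIntegrable _ _
      · exact (hb.pow 2).intervalIntegrable _ _
      · exact (continuous_const.mul (ha.pow 2)).intervalIntegrable _ _
      · exact ((continuous_const.mul (ha.mul hb)).add (hb.pow 2)).intervalIntegrable _ _
    nlinarith [h0, hexp, sq_nonneg θ]
  have hdisc := discrim_le_zero key
  rw [discrim] at hdisc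
  have hRQ : R^2 ≤ P * Q := by nlinarith
  calc R ≤ |R| := le_abs_self R
    _ = Real.sqrt (R^2) := (Real.sqrt_sq_eq_abs R).symm
    _ ≤ Real.sqrt (P * Q) := Real.sqrt_le_sqrt hRQ
    _ = Real.sqrt P * Real.sqrt Q := Real.sqrt_mul hPnn Q

theorem eqOn_Icc_of_Ioo {X : Type*} [TopologicalSpace X] [T2Space X] {g h : ℝ → X}
    (hg : Continuous g) (hh : Continuous h) (heq : Set.EqOn g h (Set.Ioo 0 1)) :
    Set.EqOn g h (Set.Icc (0:ℝ) 1) := by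
  have := heq.closure hg hh
  rwa [closure_Ioo (zero_ne_one : (0:ℝ) ≠ 1)] at this

theorem leOn_Icc_of_Ioo {g h : ℝ → ℝ}
    (hg : Continuous g) (hh : Continuous h) (hle : ∀ x ∈ Set.Ioo (0:ℝ) 1, g x ≤ h x) :
    ∀ x ∈ Set.Icc (0:ℝ) 1, g x ≤ h x := by
  intro x hx
  have hsub : Set.Icc (0:ℝ) 1 ⊆ {y | g y ≤ h y} := by
    rw [← closure_Ioo (zero_ne_one : (0:ℝ) ≠ 1)]
    exact closure_minimal hle (isClosed_le hg hh)
  exact hsub hx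

set_option maxHeartbeats 2000000 in
theorem stmt9 {d : ℕ} (f ftilde : ℝ → ℝ → EuclideanSpace ℝ (Fin d))
    (ψ : ℝ → ℝ → ℝ) (T : EReal) (hT : 0 < T) (ℓ : ℝ)
    (p₀ p₁ : EuclideanSpace ℝ (Fin d))
    (hf : ContDiff ℝ (⊤ : ℕ∞) (Function.uncurry f))
    (hft : ContDiff ℝ (⊤ : ℕ∞) (Function.uncurry ftilde))
    (hψ : ContDiff ℝ (⊤ : ℕ∞) (Function.uncurry ψ))
    (himm : ∀ t : ℝ, 0 ≤ t → (t : EReal) < T → ∀ x : ℝ, deriv (f t) x ≠ 0)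
    (hbd : ∀ t : ℝ, 0 ≤ t → (t : EReal) < T → f t 0 = p₀ ∧ f t 1 = p₁)
    (hℓ : 0 < ℓ)
    -- along the length-preserving elastic flow the length is constant
    -- and the elastic energy is non-increasing:
    (hLconst : ∀ t : ℝ, 0 ≤ t → (t : EReal) < T → curveLength (f t) = ℓ)
    (hEmono : ∀ t : ℝ, 0 ≤ t → (t : EReal) < T →
      elasticEnergy (f t) ≤ elasticEnergy (f 0))
    (hinv : ∀ t : ℝ, 0 ≤ t → (t : EReal) < T → ∀ x ∈ Set.Icc (0:ℝ) 1,
      ψ t x ∈ Set.Icc (0:ℝ) 1 ∧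
      (curveLength (f t))⁻¹ * (∫ z in (0:ℝ)..(ψ t x), ‖deriv (f t) z‖) = x ∧
      ftilde t x = f t (ψ t x)) :
    ∀ t : ℝ, 0 ≤ t → (t : EReal) < T →
      Real.sqrt (∫ x in (0:ℝ)..1, ‖deriv (fun s => ftilde s x) t‖^2)
        ≤ Real.sqrt (2 / ℓ + 16 * elasticEnergy (f 0))
          * Real.sqrt (∫ x in (0:ℝ)..1,
              ‖deriv (fun s => f s x) t‖^2 * ‖deriv (f t) x‖) := by
  set E₀ : ℝ := elasticEnergy (f 0) with hE₀def
  set C2 : ℝ := 2 / ℓ + 16 * E₀ with hC2def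
  set Iv : ℝ → ℝ := fun s => ∫ x in (0:ℝ)..1, ‖PT ftilde s x‖^2 with hIvdef
  set J : ℝ → ℝ := fun s => ∫ x in (0:ℝ)..1, ‖PT f s x‖^2 * ‖PX f s x‖ with hJdef
  have hE0nn : 0 ≤ E₀ := by
    rw [hE₀def]
    unfold elasticEnergy
    have : 0 ≤ ∫ x in (0:ℝ)..1, ‖curv (f 0) x‖^2 * ‖deriv (f 0) x‖ :=
      intervalIntegral.integral_nonneg zero_le_one
        (fun x _ => mul_nonneg (sq_nonneg _) (norm_nonneg _))
    linarith
  have hC2nn : 0 ≤ C2 := by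
    rw [hC2def]
    have : 0 ≤ 2 / ℓ := by positivity
    linarith
  have key : ∀ s : ℝ, 0 < s → (s : EReal) < T → Iv s ≤ C2 * J s := by
    intro t ht0p htT
    have ht0 : (0:ℝ) ≤ t := le_of_lt ht0p
    set U : Set ℝ := {s : ℝ | 0 < s ∧ (s : EReal) < T} with hUdef
    have hUopen : IsOpen U := by
      have h1 : IsOpen {s : ℝ | 0 < s} := isOpen_lt continuous_const continuous_id
      have h2 : IsOpen {s : ℝ | (s : EReal) < T} :=
        isOpen_lt continuous_coe_real_ereal continuous_const
      exact h1.inter h2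
    have htU : t ∈ U := ⟨ht0p, htT⟩
    have hUnhds : U ∈ nhds t := hUopen.mem_nhds htU
    have hUadm : ∀ s ∈ U, 0 ≤ s ∧ (s : EReal) < T := fun s hs => ⟨le_of_lt hs.1, hs.2⟩
    -- the speed γ
    have hg0 : ∀ s : ℝ, 0 ≤ s → (s : EReal) < T → ∀ z : ℝ, PX f s z ≠ 0 := by
      intro s hs0 hsT z
      rw [← deriv_PX hf]
      exact himm s hs0 hsT z
    have hgpos : ∀ s : ℝ, 0 ≤ s → (s : EReal) < T → ∀ z : ℝ, 0 < ‖PX f s z‖ :=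
      fun s hs0 hsT z => norm_pos_iff.2 (hg0 s hs0 hsT z)
    set Φ : ℝ → ℝ → ℝ := fun s y => ∫ z in (0:ℝ)..y, ‖PX f s z‖ with hΦdef
    have hΓconts : ∀ s : ℝ, Continuous (fun z => ‖PX f s z‖) := fun s =>
      (((contDiff_PX hf).continuous).comp (Continuous.prodMk_right s)).norm
    have hΦd : ∀ s y : ℝ, HasDerivAt (Φ s) ‖PX f s y‖ y := by
      intro s y
      exact intervalIntegral.integral_hasDerivAt_right
        ((hΓconts s).intervalIntegrable _ _)
        ((hΓconts s).stronglyMeasurableAtFilter _ _)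
        (hΓconts s).continuousAt
    have hΦmono : ∀ s : ℝ, 0 ≤ s → (s : EReal) < T → StrictMono (Φ s) := by
      intro s hs0 hsT
      apply strictMono_of_deriv_pos
      intro y
      rw [(hΦd s y).deriv]
      exact hgpos s hs0 hsT y
    have hΦ0 : ∀ s : ℝ, Φ s 0 = 0 := fun s => intervalIntegral.integral_same
    have hΦL : ∀ s : ℝ, 0 ≤ s → (s : EReal) < T → Φ s 1 = ℓ := by
      intro s hs0 hsT
      rw [← hLconst s hs0 hsT]
      unfold curveLength
      refine (intervalIntegral.integral_congr (fun z _ => ?_)).symm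
      rw [deriv_PX hf]
    have hinv2 : ∀ s : ℝ, 0 ≤ s → (s : EReal) < T → ∀ x ∈ Set.Icc (0:ℝ) 1,
        Φ s (ψ s x) = ℓ * x := by
      intro s hs0 hsT x hx
      have h := (hinv s hs0 hsT x hx).2.1
      rw [hLconst s hs0 hsT] at h
      have h2 : (∫ z in (0:ℝ)..(ψ s x), ‖deriv (f s) z‖) = Φ s (ψ s x) :=
        intervalIntegral.integral_congr (fun z _ => by rw [deriv_PX hf])
      rw [h2] at h
      field_simp at h
      linarith [h]
    have hψIcc : ∀ s : ℝ, 0 ≤ s → (s : EReal) < T → ∀ x ∈ Set.Icc (0:ℝ) 1,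
        ψ s x ∈ Set.Icc (0:ℝ) 1 := fun s hs0 hsT x hx => (hinv s hs0 hsT x hx).1
    have hftf : ∀ s : ℝ, 0 ≤ s → (s : EReal) < T → ∀ x ∈ Set.Icc (0:ℝ) 1,
        ftilde s x = f s (ψ s x) := fun s hs0 hsT x hx => (hinv s hs0 hsT x hx).2.2
    have hψ0 : ∀ s : ℝ, 0 ≤ s → (s : EReal) < T → ψ s 0 = 0 := by
      intro s hs0 hsT
      have h1 : Φ s (ψ s 0) = 0 := by
        rw [hinv2 s hs0 hsT 0 (Set.mem_Icc.2 ⟨le_refl _, zero_le_one⟩)]; ring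
      have h2 : Φ s (ψ s 0) = Φ s 0 := by rw [h1, hΦ0 s]
      exact (hΦmono s hs0 hsT).injective h2
    -- spatial chain rule facts, for each admissible s and x ∈ Ioo 0 1
    have hwfact : ∀ s : ℝ, 0 ≤ s → (s : EReal) < T → ∀ x ∈ Set.Ioo (0:ℝ) 1,
        PX ftilde s x = PX ψ s x • PX f s (ψ s x) ∧
        PX ψ s x * ‖PX f s (ψ s x)‖ = ℓ := by
      intro s hs0 hsT x hx
      have hIoo : Set.Ioo (0:ℝ) 1 ∈ nhds x := isOpen_Ioo.mem_nhds hx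
      have hEq : (fun y => ftilde s y) =ᶠ[nhds x] (fun y => f s (ψ s y)) := by
        filter_upwards [hIoo] with y hy
        exact hftf s hs0 hsT y (Set.Ioo_subset_Icc_self hy)
      have hcomp : HasDerivAt ((f s) ∘ (ψ s)) (PX ψ s x • PX f s (ψ s x)) x :=
        (hasDerivAt_PX hf s (ψ s x)).scomp x (hasDerivAt_PX hψ s x)
      have h1 : PX ftilde s x = PX ψ s x • PX f s (ψ s x) := by
        rw [← deriv_PX hft, hEq.deriv_eq]
        exact hcomp.deriv
      have hEq2 : (fun y => Φ s (ψ s y)) =ᶠ[nhds x] (fun y => ℓ * y) := by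
        filter_upwards [hIoo] with y hy
        exact hinv2 s hs0 hsT y (Set.Ioo_subset_Icc_self hy)
      have hcomp2 : HasDerivAt ((Φ s) ∘ (ψ s)) (PX ψ s x • ‖PX f s (ψ s x)‖) x :=
        (hΦd s (ψ s x)).scomp x (hasDerivAt_PX hψ s x)
      have hlin : HasDerivAt (fun y : ℝ => ℓ * y) ℓ x := by
        simpa using (hasDerivAt_id x).const_mul ℓ
      have h2 : PX ψ s x * ‖PX f s (ψ s x)‖ = ℓ := by
        have hde := hEq2.deriv_eq
        rw [hlin.deriv] at hde
        have : deriv (fun y => Φ s (ψ s y)) x = PX ψ s x • ‖PX f s (ψ s x)‖ :=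
          hcomp2.deriv
        rw [this] at hde
        simpa [smul_eq_mul] using hde
      exact ⟨h1, h2⟩
    have hψxpos : ∀ s : ℝ, 0 ≤ s → (s : EReal) < T → ∀ x ∈ Set.Ioo (0:ℝ) 1,
        0 < PX ψ s x := by
      intro s hs0 hsT x hx
      have h2 := (hwfact s hs0 hsT x hx).2
      have hγ := hgpos s hs0 hsT (ψ s x)
      nlinarith [hγ, hℓ]
    have hwnorm : ∀ s : ℝ, 0 ≤ s → (s : EReal) < T → ∀ x ∈ Set.Ioo (0:ℝ) 1,
        ‖PX ftilde s x‖ = ℓ := by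
      intro s hs0 hsT x hx
      obtain ⟨h1, h2⟩ := hwfact s hs0 hsT x hx
      rw [h1, norm_smul, Real.norm_eq_abs, abs_of_pos (hψxpos s hs0 hsT x hx)]
      exact h2
    -- time chain rule: decomposition of v
    have hsplit : ∀ c : ℝ, ((1:ℝ), c) = ((1:ℝ),(0:ℝ)) + c • ((0:ℝ),(1:ℝ)) := by
      intro c; simp [Prod.ext_iff]
    have hv : ∀ x ∈ Set.Icc (0:ℝ) 1,
        PT ftilde t x = PT f t (ψ t x) + PT ψ t x • PX f t (ψ t x) := by
      intro x hx
      have hEq : (fun s => ftilde s x) =ᶠ[nhds t] (fun s => f s (ψ s x)) := by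
        filter_upwards [hUnhds] with s hs
        exact hftf s (hUadm s hs).1 (hUadm s hs).2 x hx
      have hin : HasDerivAt (fun s : ℝ => (s, ψ s x)) ((1:ℝ), PT ψ t x) t :=
        (hasDerivAt_id t).prodMk (hasDerivAt_PT hψ t x)
      have hF : HasFDerivAt (Function.uncurry f)
          (fderiv ℝ (Function.uncurry f) (t, ψ t x)) (t, ψ t x) :=
        (hf.differentiable (by simp)).differentiableAt.hasFDerivAt
      have hcomp : HasDerivAt (fun s => f s (ψ s x))
          (fderiv ℝ (Function.uncurry f) (t, ψ t x) ((1:ℝ), PT ψ t x)) t := by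
        have := hF.comp_hasDerivAt t hin; exact this
      have hval : fderiv ℝ (Function.uncurry f) (t, ψ t x) ((1:ℝ), PT ψ t x)
          = PT f t (ψ t x) + PT ψ t x • PX f t (ψ t x) := by
        rw [hsplit (PT ψ t x), map_add, ContinuousLinearMap.map_smul]
        rfl
      rw [← deriv_PT hft, hEq.deriv_eq, hcomp.deriv, hval]
    -- v vanishes at the left endpoint
    have hv0 : PT ftilde t 0 = 0 := by
      have hEq : (fun s => ftilde s 0) =ᶠ[nhds t] (fun _ => p₀) := by
        filter_upwards [hUnhds] with s hs
        obtain ⟨hs0, hsT⟩ := hUadm s hs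
        rw [hftf s hs0 hsT 0 (Set.mem_Icc.2 ⟨le_refl _, zero_le_one⟩), hψ0 s hs0 hsT]
        exact (hbd s hs0 hsT).1
      rw [← deriv_PT hft, hEq.deriv_eq, deriv_const]
    -- ∂ₓ v ⟂ w
    have hvw' : ∀ x ∈ Set.Ioo (0:ℝ) 1,
        ⟪PX (PT ftilde) t x, PX ftilde t x⟫ = 0 := by
      intro x hx
      have hW : HasDerivAt (fun s => PX ftilde s x) (PT (PX ftilde) t x) t :=
        hasDerivAt_PT (contDiff_PX hft) t x
      have hr : HasDerivAt (fun s => ⟪PX ftilde s x, PX ftilde s x⟫)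
          (⟪PX ftilde t x, PT (PX ftilde) t x⟫ + ⟪PT (PX ftilde) t x, PX ftilde t x⟫) t :=
        hW.inner ℝ hW
      have hEq : (fun s => ⟪PX ftilde s x, PX ftilde s x⟫) =ᶠ[nhds t]
          (fun _ => ℓ^2) := by
        filter_upwards [hUnhds] with s hs
        obtain ⟨hs0, hsT⟩ := hUadm s hs
        rw [real_inner_self_eq_norm_sq, hwnorm s hs0 hsT x hx]
      have h0 : ⟪PX ftilde t x, PT (PX ftilde) t x⟫
          + ⟪PT (PX ftilde) t x, PX ftilde t x⟫ = 0 := by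
        rw [← hr.deriv, hEq.deriv_eq, deriv_const]
      rw [clairaut hft t x]
      have := real_inner_comm (PX ftilde t x) (PT (PX ftilde) t x)
      linarith
    -- ∂ₓ w ⟂ w
    have hww' : ∀ x ∈ Set.Ioo (0:ℝ) 1,
        ⟪PX (PX ftilde) t x, PX ftilde t x⟫ = 0 := by
      intro x hx
      have hW : HasDerivAt (fun y => PX ftilde t y) (PX (PX ftilde) t x) x :=
        hasDerivAt_PX (contDiff_PX hft) t x
      have hr : HasDerivAt (fun y => ⟪PX ftilde t y, PX ftilde t y⟫)
          (⟪PX ftilde t x, PX (PX ftilde) t x⟫ + ⟪PX (PX ftilde) t x, PX ftilde t x⟫) x :=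
        hW.inner ℝ hW
      have hEq : (fun y => ⟪PX ftilde t y, PX ftilde t y⟫) =ᶠ[nhds x]
          (fun _ => ℓ^2) := by
        filter_upwards [isOpen_Ioo.mem_nhds hx] with y hy
        rw [real_inner_self_eq_norm_sq, hwnorm t ht0 htT y hy]
      have h0 : ⟪PX ftilde t x, PX (PX ftilde) t x⟫
          + ⟪PX (PX ftilde) t x, PX ftilde t x⟫ = 0 := by
        rw [← hr.deriv, hEq.deriv_eq, deriv_const]
      have := real_inner_comm (PX ftilde t x) (PX (PX ftilde) t x)
      linarith
    -- continuity of the various fields at time t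
    have hvcont : Continuous (fun z => PT ftilde t z) :=
      (contDiff_PT hft).continuous.comp (Continuous.prodMk_right t)
    have hwcont : Continuous (fun z => PX ftilde t z) :=
      (contDiff_PX hft).continuous.comp (Continuous.prodMk_right t)
    have hvxcont : Continuous (fun z => PX (PT ftilde) t z) :=
      (contDiff_PX (contDiff_PT hft)).continuous.comp (Continuous.prodMk_right t)
    have hwxcont : Continuous (fun z => PX (PX ftilde) t z) :=
      (contDiff_PX (contDiff_PX hft)).continuous.comp (Continuous.prodMk_right t)
    have hucont : Continuous (fun y => PT f t y) :=
      (contDiff_PT hf).continuous.comp (Continuous.prodMk_right t)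
    have hgcont : Continuous (fun y => PX f t y) :=
      (contDiff_PX hf).continuous.comp (Continuous.prodMk_right t)
    have hψcont : Continuous (ψ t) := hψ.continuous.comp (Continuous.prodMk_right t)
    -- extensions to the closed interval
    have hvw'Icc : ∀ z ∈ Set.Icc (0:ℝ) 1, ⟪PX (PT ftilde) t z, PX ftilde t z⟫ = 0 := by
      have := eqOn_Icc_of_Ioo (g := fun z => ⟪PX (PT ftilde) t z, PX ftilde t z⟫)
        (h := fun _ => (0:ℝ)) (hvxcont.inner hwcont) continuous_const
        (fun z hz => hvw' z hz)
      exact fun z hz => this hz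
    have hww'Icc : ∀ z ∈ Set.Icc (0:ℝ) 1, ⟪PX (PX ftilde) t z, PX ftilde t z⟫ = 0 := by
      have := eqOn_Icc_of_Ioo (g := fun z => ⟪PX (PX ftilde) t z, PX ftilde t z⟫)
        (h := fun _ => (0:ℝ)) (hwxcont.inner hwcont) continuous_const
        (fun z hz => hww' z hz)
      exact fun z hz => this hz
    have hwnormIcc : ∀ z ∈ Set.Icc (0:ℝ) 1, ‖PX ftilde t z‖ = ℓ := by
      have := eqOn_Icc_of_Ioo (g := fun z => ‖PX ftilde t z‖)
        (h := fun _ => ℓ) hwcont.norm continuous_const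
        (fun z hz => hwnorm t ht0 htT z hz)
      exact fun z hz => this hz
    -- σ, the tangential component of v
    set σf : ℝ → ℝ := fun z => ℓ⁻¹ * ⟪PT ftilde t z, PX ftilde t z⟫ with hσfdef
    have hσcont : Continuous σf := continuous_const.mul (hvcont.inner hwcont)
    have hσd : ∀ z : ℝ, HasDerivAt σf
        (ℓ⁻¹ * (⟪PT ftilde t z, PX (PX ftilde) t z⟫
          + ⟪PX (PT ftilde) t z, PX ftilde t z⟫)) z := by
      intro z
      exact ((hasDerivAt_PX (contDiff_PT hft) t z).inner ℝ
        (hasDerivAt_PX (contDiff_PX hft) t z)).const_mul ℓ⁻¹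
    have hσ0 : σf 0 = 0 := by
      rw [hσfdef]
      simp [hv0]
    have hσrep : ∀ x ∈ Set.Icc (0:ℝ) 1,
        σf x = ∫ z in (0:ℝ)..x, ℓ⁻¹ * ⟪PT ftilde t z, PX (PX ftilde) t z⟫ := by
      intro x hx
      have hftc : (∫ z in (0:ℝ)..x, ℓ⁻¹ * (⟪PT ftilde t z, PX (PX ftilde) t z⟫
          + ⟪PX (PT ftilde) t z, PX ftilde t z⟫)) = σf x - σf 0 := by
        apply intervalIntegral.integral_eq_sub_of_hasDerivAt (fun z _ => hσd z)
        exact (continuous_const.mul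
          ((hvcont.inner hwxcont).add (hvxcont.inner hwcont))).intervalIntegrable _ _
      have hcongr : (∫ z in (0:ℝ)..x, ℓ⁻¹ * (⟪PT ftilde t z, PX (PX ftilde) t z⟫
          + ⟪PX (PT ftilde) t z, PX ftilde t z⟫))
          = ∫ z in (0:ℝ)..x, ℓ⁻¹ * ⟪PT ftilde t z, PX (PX ftilde) t z⟫ := by
        refine intervalIntegral.integral_congr (fun z hz => ?_)
        have hz' : z ∈ Set.Icc (0:ℝ) 1 := by
          rw [Set.uIcc_of_le hx.1] at hz
          exact ⟨hz.1, le_trans hz.2 hx.2⟩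
        rw [hvw'Icc z hz']
        ring
      rw [hcongr, hσ0, sub_zero] at hftc
      linarith [hftc]
    -- the unit tangent τ of f t and the curvature
    set τ : ℝ → EuclideanSpace ℝ (Fin d) :=
      fun y => ‖PX f t y‖⁻¹ • PX f t y with hτdef
    have hg0smooth : ContDiff ℝ (⊤ : ℕ∞) (fun y => PX f t y) :=
      (contDiff_PX hf).comp (contDiff_const.prodMk contDiff_id)
    have hνne : ∀ y : ℝ, ‖PX f t y‖ ≠ 0 := fun y => ne_of_gt (hgpos t ht0 htT y)
    have hνsmooth : ContDiff ℝ (⊤ : ℕ∞) (fun y => ‖PX f t y‖) :=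
      hg0smooth.norm ℝ (fun y => hg0 t ht0 htT y)
    have hτsmooth : ContDiff ℝ (⊤ : ℕ∞) τ := (hνsmooth.inv hνne).smul hg0smooth
    have hτeq : utang (f t) = τ := by
      funext y
      unfold utang
      rw [hτdef]
      rw [deriv_PX hf]
    have hτd : ∀ y : ℝ, HasDerivAt τ (deriv τ y) y := fun y =>
      ((hτsmooth.differentiable (by simp)) y).hasDerivAt
    have hτdcont : Continuous (deriv τ) := hτsmooth.continuous_deriv (by simp)
    have hcurv_eq : ∀ y : ℝ, curv (f t) y = ‖PX f t y‖⁻¹ • deriv τ y := by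
      intro y
      unfold curv sderiv
      rw [hτeq, deriv_PX hf]
    have hcurvcont : Continuous (curv (f t)) := by
      rw [show curv (f t) = fun y => ‖PX f t y‖⁻¹ • deriv τ y from funext hcurv_eq]
      exact ((hgcont.norm).inv₀ hνne).smul hτdcont
    -- formula for ∂ₓ w in terms of the curvature
    have hwx2 : ∀ z ∈ Set.Ioo (0:ℝ) 1,
        PX (PX ftilde) t z = (ℓ^2) • curv (f t) (ψ t z) := by
      intro z hz
      have hEq : (fun y => PX ftilde t y) =ᶠ[nhds z] (fun y => ℓ • τ (ψ t y)) := by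
        filter_upwards [isOpen_Ioo.mem_nhds hz] with y hy
        obtain ⟨h1, h2⟩ := hwfact t ht0 htT y hy
        have hsc : PX ψ t y = ℓ * (‖PX f t (ψ t y)‖)⁻¹ := by
          rw [← h2, mul_assoc, mul_inv_cancel₀ (hνne _), mul_one]
        rw [h1, hτdef]
        rw [smul_smul, hsc]
      have hRd : HasDerivAt (fun y => ℓ • τ (ψ t y))
          (ℓ • (PX ψ t z • deriv τ (ψ t z))) z :=
        HasDerivAt.const_smul ℓ ((hτd (ψ t z)).scomp z (hasDerivAt_PX hψ t z))
      have hval : PX (PX ftilde) t z = ℓ • (PX ψ t z • deriv τ (ψ t z)) := by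
        rw [← (hasDerivAt_PX (contDiff_PX hft) t z).deriv, hEq.deriv_eq, hRd.deriv]
      obtain ⟨h1, h2⟩ := hwfact t ht0 htT z hz
      have hsc : PX ψ t z = ℓ * (‖PX f t (ψ t z)‖)⁻¹ := by
        rw [← h2, mul_assoc, mul_inv_cancel₀ (hνne _), mul_one]
      rw [hval, hcurv_eq, hsc, smul_smul, smul_smul]
      rw [show ℓ * (ℓ * ‖PX f t (ψ t z)‖⁻¹) = ℓ^2 * ‖PX f t (ψ t z)‖⁻¹ by ring]
    have hwxnormIcc : ∀ z ∈ Set.Icc (0:ℝ) 1,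
        ‖PX (PX ftilde) t z‖ = ℓ^2 * ‖curv (f t) (ψ t z)‖ := by
      have := eqOn_Icc_of_Ioo (g := fun z => ‖PX (PX ftilde) t z‖)
        (h := fun z => ℓ^2 * ‖curv (f t) (ψ t z)‖) hwxcont.norm
        (continuous_const.mul ((hcurvcont.comp hψcont).norm))
        (fun z hz => by
          show ‖PX (PX ftilde) t z‖ = ℓ^2 * ‖curv (f t) (ψ t z)‖
          rw [hwx2 z hz, norm_smul, Real.norm_eq_abs, abs_of_nonneg (sq_nonneg ℓ)])
      exact fun z hz => this hz
    -- change of variables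
    have hψφ : ∀ y ∈ Set.Icc (0:ℝ) 1, ψ t (ℓ⁻¹ * Φ t y) = y := by
      intro y hy
      have hmem : ℓ⁻¹ * Φ t y ∈ Set.Icc (0:ℝ) 1 := by
        have h0 : Φ t 0 ≤ Φ t y := (hΦmono t ht0 htT).monotone hy.1
        have h1 : Φ t y ≤ Φ t 1 := (hΦmono t ht0 htT).monotone hy.2
        rw [hΦ0 t] at h0
        rw [hΦL t ht0 htT] at h1
        constructor
        · positivity
        · rw [← inv_mul_cancel₀ (ne_of_gt hℓ)]
          exact mul_le_mul_of_nonneg_left h1 (by positivity)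
      have heq : Φ t (ψ t (ℓ⁻¹ * Φ t y)) = Φ t y := by
        rw [hinv2 t ht0 htT _ hmem]
        field_simp
      exact (hΦmono t ht0 htT).injective heq
    have hCoV : ∀ h : ℝ → ℝ, Continuous h →
        (∫ x in (0:ℝ)..1, h (ψ t x))
          = ∫ y in (0:ℝ)..1, (ℓ⁻¹ * ‖PX f t y‖) * h y := by
      intro h hh
      have hφd : ∀ y ∈ Set.uIcc (0:ℝ) 1,
          HasDerivAt (fun y => ℓ⁻¹ * Φ t y) (ℓ⁻¹ * ‖PX f t y‖) y :=
        fun y _ => (hΦd t y).const_mul ℓ⁻¹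
      have hφ'cont : ContinuousOn (fun y => ℓ⁻¹ * ‖PX f t y‖) (Set.uIcc (0:ℝ) 1) :=
        (continuous_const.mul (hΓconts t)).continuousOn
      have hcv := intervalIntegral.integral_comp_smul_deriv hφd hφ'cont (hh.comp hψcont)
      have he0 : ℓ⁻¹ * Φ t 0 = 0 := by rw [hΦ0 t]; ring
      have he1 : ℓ⁻¹ * Φ t 1 = 1 := by
        rw [hΦL t ht0 htT]
        field_simp
      rw [he0, he1] at hcv
      rw [show (∫ x in (0:ℝ)..1, h (ψ t x)) = ∫ x in (0:ℝ)..1, (h ∘ ψ t) x from rfl,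
        ← hcv]
      refine intervalIntegral.integral_congr (fun y hy => ?_)
      have hy' : y ∈ Set.Icc (0:ℝ) 1 := by rwa [Set.uIcc_of_le zero_le_one] at hy
      show (ℓ⁻¹ * ‖PX f t y‖) • (h ∘ ψ t) (ℓ⁻¹ * Φ t y) = (ℓ⁻¹ * ‖PX f t y‖) * h y
      rw [Function.comp_apply, hψφ y hy', smul_eq_mul]
    -- the normal component of v
    set vp : ℝ → EuclideanSpace ℝ (Fin d) :=
      fun z => PT ftilde t z - (σf z * ℓ⁻¹) • PX ftilde t z with hvpdef
    have hvpcont : Continuous vp :=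
      hvcont.sub ((hσcont.mul continuous_const).smul hwcont)
    have hvpw : ∀ z ∈ Set.Icc (0:ℝ) 1, ⟪vp z, PX ftilde t z⟫ = 0 := by
      intro z hz
      have hww : ⟪PX ftilde t z, PX ftilde t z⟫ = ℓ^2 := by
        rw [real_inner_self_eq_norm_sq, hwnormIcc z hz]
      have hvwi : ⟪PT ftilde t z, PX ftilde t z⟫ = ℓ * σf z := by
        rw [hσfdef]
        field_simp
      rw [hvpdef]
      simp only [inner_sub_left, real_inner_smul_left]
      rw [hww, hvwi]
      field_simp
      ring
    have hPyth : ∀ z ∈ Set.Icc (0:ℝ) 1,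
        ‖PT ftilde t z‖^2 = ‖vp z‖^2 + (σf z)^2 := by
      intro z hz
      have hdecomp : PT ftilde t z = vp z + (σf z * ℓ⁻¹) • PX ftilde t z := by
        simp only [hvpdef]
        abel
      rw [hdecomp, norm_add_sq_real, real_inner_smul_right, hvpw z hz, norm_smul,
        Real.norm_eq_abs, hwnormIcc z hz, mul_pow, sq_abs]
      have : (σf z * ℓ⁻¹)^2 * ℓ^2 = (σf z)^2 := by
        field_simp
      rw [this]
      ring
    -- pointwise comparison with u∘ψ
    have hvp_le : ∀ z ∈ Set.Icc (0:ℝ) 1, ‖vp z‖^2 ≤ ‖PT f t (ψ t z)‖^2 := by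
      apply leOn_Icc_of_Ioo (hvpcont.norm.pow 2)
        (((hucont.comp hψcont).norm).pow 2)
      intro z hz
      show ‖vp z‖^2 ≤ ‖PT f t (ψ t z)‖^2
      have hzIcc := Set.Ioo_subset_Icc_self hz
      obtain ⟨h1, h2⟩ := hwfact t ht0 htT z hz
      have hψxne : PX ψ t z ≠ 0 := ne_of_gt (hψxpos t ht0 htT z hz)
      have hgψ : PX f t (ψ t z) = (PX ψ t z)⁻¹ • PX ftilde t z := by
        rw [h1, smul_smul, inv_mul_cancel₀ hψxne, one_smul]
      have hva : PT ftilde t z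
          = PT f t (ψ t z) + (PT ψ t z * (PX ψ t z)⁻¹) • PX ftilde t z := by
        rw [hv z hzIcc, hgψ, smul_smul]
      have hu_eq : PT f t (ψ t z)
          = vp z + (σf z * ℓ⁻¹ - PT ψ t z * (PX ψ t z)⁻¹) • PX ftilde t z := by
        simp only [hvpdef, sub_smul]
        rw [hva]
        abel
      rw [hu_eq, norm_add_sq_real, real_inner_smul_right, hvpw z hzIcc, norm_smul,
        Real.norm_eq_abs, hwnormIcc z hzIcc, mul_pow, sq_abs]
      nlinarith [sq_nonneg ((σf z * ℓ⁻¹ - PT ψ t z * (PX ψ t z)⁻¹) * ℓ)]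
    -- the three integral quantities
    obtain ⟨A, hAdef⟩ : ∃ r : ℝ, r = ∫ z in (0:ℝ)..1, ‖vp z‖^2 := ⟨_, rfl⟩
    obtain ⟨B, hBdef⟩ : ∃ r : ℝ, r = ∫ z in (0:ℝ)..1, ‖curv (f t) (ψ t z)‖^2 := ⟨_, rfl⟩
    obtain ⟨S2, hS2def⟩ : ∃ r : ℝ, r = ∫ z in (0:ℝ)..1, (σf z)^2 := ⟨_, rfl⟩
    have hAnn : 0 ≤ A := by
      rw [hAdef]
      exact intervalIntegral.integral_nonneg zero_le_one (fun z _ => sq_nonneg _)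
    have hBnn : 0 ≤ B := by
      rw [hBdef]
      exact intervalIntegral.integral_nonneg zero_le_one (fun z _ => sq_nonneg _)
    have hJnn : 0 ≤ J t :=
      intervalIntegral.integral_nonneg zero_le_one
        (fun z _ => mul_nonneg (sq_nonneg _) (norm_nonneg _))
    have hsplitIv : Iv t = A + S2 := by
      have h1 : (∫ x in (0:ℝ)..1, ‖PT ftilde t x‖^2)
          = ∫ x in (0:ℝ)..1, (‖vp x‖^2 + (σf x)^2) := by
        refine intervalIntegral.integral_congr (fun z hz => ?_)
        rw [Set.uIcc_of_le zero_le_one] at hz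
        exact hPyth z hz
      show (∫ x in (0:ℝ)..1, ‖PT ftilde t x‖^2) = A + S2
      rw [h1, intervalIntegral.integral_add (f := fun x => ‖vp x‖^2) (g := fun x => (σf x)^2)
        ((hvpcont.norm.pow 2).intervalIntegrable _ _)
        ((hσcont.pow 2).intervalIntegrable _ _), hAdef, hS2def]
    have hA_le : A ≤ ℓ⁻¹ * J t := by
      have h1 : A ≤ ∫ z in (0:ℝ)..1, ‖PT f t (ψ t z)‖^2 := by
        rw [hAdef]
        exact intervalIntegral.integral_mono_on zero_le_one
          ((hvpcont.norm.pow 2).intervalIntegrable _ _)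
          ((((hucont.comp hψcont).norm).pow 2).intervalIntegrable _ _) hvp_le
      have h2 : (∫ z in (0:ℝ)..1, ‖PT f t (ψ t z)‖^2)
          = ∫ y in (0:ℝ)..1, (ℓ⁻¹ * ‖PX f t y‖) * ‖PT f t y‖^2 :=
        hCoV (fun y => ‖PT f t y‖^2) (hucont.norm.pow 2)
      have h3 : (∫ y in (0:ℝ)..1, (ℓ⁻¹ * ‖PX f t y‖) * ‖PT f t y‖^2)
          = ℓ⁻¹ * J t := by
        show _ = ℓ⁻¹ * ∫ x in (0:ℝ)..1, ‖PT f t x‖^2 * ‖PX f t x‖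
        rw [← intervalIntegral.integral_const_mul]
        refine intervalIntegral.integral_congr (fun y hy => ?_)
        ring
      rw [h2, h3] at h1
      exact h1
    have hB_eq : B = ℓ⁻¹ * (2 * elasticEnergy (f t)) := by
      have h2 : (∫ z in (0:ℝ)..1, ‖curv (f t) (ψ t z)‖^2)
          = ∫ y in (0:ℝ)..1, (ℓ⁻¹ * ‖PX f t y‖) * ‖curv (f t) y‖^2 :=
        hCoV (fun y => ‖curv (f t) y‖^2) (hcurvcont.norm.pow 2)
      rw [hBdef]
      have h3 : (∫ y in (0:ℝ)..1, (ℓ⁻¹ * ‖PX f t y‖) * ‖curv (f t) y‖^2)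
          = ℓ⁻¹ * ∫ y in (0:ℝ)..1, ‖curv (f t) y‖^2 * ‖deriv (f t) y‖ := by
        rw [← intervalIntegral.integral_const_mul]
        refine intervalIntegral.integral_congr (fun y hy => ?_)
        rw [deriv_PX hf]
        ring
      rw [h2, h3]
      unfold elasticEnergy
      ring
    have hB_le : B ≤ ℓ⁻¹ * (2 * E₀) := by
      rw [hB_eq]
      have hEt := hEmono t ht0 htT
      have hpos : (0:ℝ) ≤ ℓ⁻¹ := by positivity
      exact mul_le_mul_of_nonneg_left (by linarith) hpos
    -- Cauchy-Schwarz bound for σ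
    have hCS : (∫ z in (0:ℝ)..1, ‖vp z‖ * ‖curv (f t) (ψ t z)‖)
        ≤ Real.sqrt A * Real.sqrt B := by
      rw [hAdef, hBdef]
      exact my_cauchy_schwarz hvpcont.norm ((hcurvcont.comp hψcont).norm)
    have hσsq : ∀ x ∈ Set.Icc (0:ℝ) 1, (σf x)^2 ≤ ℓ^2 * (A * B) := by
      intro x hx
      have hptw : ∀ z ∈ Set.Icc (0:ℝ) 1,
          |ℓ⁻¹ * ⟪PT ftilde t z, PX (PX ftilde) t z⟫|
            ≤ ℓ * (‖vp z‖ * ‖curv (f t) (ψ t z)‖) := by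
        intro z hz
        have hsub : ⟪PT ftilde t z, PX (PX ftilde) t z⟫
            = ⟪vp z, PX (PX ftilde) t z⟫ := by
          have hde : PT ftilde t z = vp z + (σf z * ℓ⁻¹) • PX ftilde t z := by
            simp only [hvpdef]; abel
          have h0 : ⟪PX ftilde t z, PX (PX ftilde) t z⟫ = 0 := by
            rw [real_inner_comm]
            exact hww'Icc z hz
          rw [hde, inner_add_left, real_inner_smul_left, h0]
          ring
        have hb : |⟪vp z, PX (PX ftilde) t z⟫|
            ≤ ‖vp z‖ * (ℓ^2 * ‖curv (f t) (ψ t z)‖) := by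
          rw [← hwxnormIcc z hz]
          exact abs_real_inner_le_norm _ _
        rw [hsub, abs_mul, abs_of_nonneg (by positivity : (0:ℝ) ≤ ℓ⁻¹)]
        calc ℓ⁻¹ * |⟪vp z, PX (PX ftilde) t z⟫|
            ≤ ℓ⁻¹ * (‖vp z‖ * (ℓ^2 * ‖curv (f t) (ψ t z)‖)) :=
              mul_le_mul_of_nonneg_left hb (by positivity)
          _ = (ℓ⁻¹ * ℓ^2) * (‖vp z‖ * ‖curv (f t) (ψ t z)‖) := by ring
          _ = ℓ * (‖vp z‖ * ‖curv (f t) (ψ t z)‖) := by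
              rw [show ℓ⁻¹ * ℓ^2 = ℓ by field_simp]
      have habs : |σf x| ≤ ℓ * (Real.sqrt A * Real.sqrt B) := by
        rw [hσrep x hx]
        have hcont1 : Continuous (fun z => ℓ⁻¹ * ⟪PT ftilde t z, PX (PX ftilde) t z⟫) :=
          continuous_const.mul (hvcont.inner hwxcont)
        calc |∫ z in (0:ℝ)..x, ℓ⁻¹ * ⟪PT ftilde t z, PX (PX ftilde) t z⟫|
            ≤ ∫ z in (0:ℝ)..x, |ℓ⁻¹ * ⟪PT ftilde t z, PX (PX ftilde) t z⟫| :=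
              intervalIntegral.abs_integral_le_integral_abs hx.1
          _ ≤ ∫ z in (0:ℝ)..1, |ℓ⁻¹ * ⟪PT ftilde t z, PX (PX ftilde) t z⟫| :=
              intervalIntegral.integral_mono_interval (le_refl (0:ℝ)) hx.1 hx.2
                (Filter.Eventually.of_forall (fun z => abs_nonneg _))
                (hcont1.abs.intervalIntegrable _ _)
          _ ≤ ∫ z in (0:ℝ)..1, ℓ * (‖vp z‖ * ‖curv (f t) (ψ t z)‖) :=
              intervalIntegral.integral_mono_on zero_le_one
                (hcont1.abs.intervalIntegrable _ _)
                ((continuous_const.mul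
                  (hvpcont.norm.mul ((hcurvcont.comp hψcont).norm))).intervalIntegrable _ _)
                hptw
          _ = ℓ * ∫ z in (0:ℝ)..1, ‖vp z‖ * ‖curv (f t) (ψ t z)‖ :=
              intervalIntegral.integral_const_mul _ _
          _ ≤ ℓ * (Real.sqrt A * Real.sqrt B) :=
              mul_le_mul_of_nonneg_left hCS hℓ.le
      have h1 : (σf x)^2 = |σf x|^2 := (sq_abs _).symm
      have h2 : |σf x|^2 ≤ (ℓ * (Real.sqrt A * Real.sqrt B))^2 := by
        apply pow_le_pow_left₀ (abs_nonneg _) habs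
      rw [h1]
      calc |σf x|^2 ≤ (ℓ * (Real.sqrt A * Real.sqrt B))^2 := h2
        _ = ℓ^2 * ((Real.sqrt A)^2 * (Real.sqrt B)^2) := by ring
        _ = ℓ^2 * (A * B) := by rw [Real.sq_sqrt hAnn, Real.sq_sqrt hBnn]
    have hS2_le : S2 ≤ ℓ^2 * (A * B) := by
      have h1 : S2 ≤ ∫ _z in (0:ℝ)..1, ℓ^2 * (A * B) := by
        rw [hS2def]
        exact intervalIntegral.integral_mono_on zero_le_one
          ((hσcont.pow 2).intervalIntegrable _ _)
          (intervalIntegrable_const) hσsq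
      simpa using h1
    -- final arithmetic
    have hABprod : A * B ≤ (ℓ⁻¹ * J t) * (ℓ⁻¹ * (2 * E₀)) :=
      mul_le_mul hA_le hB_le hBnn (by positivity)
    have hS2fin : S2 ≤ 2 * E₀ * J t := by
      have h2 : ℓ^2 * ((ℓ⁻¹ * J t) * (ℓ⁻¹ * (2 * E₀))) = 2 * E₀ * J t := by
        field_simp
      nlinarith [hS2_le, hABprod, sq_nonneg ℓ]
    rw [hsplitIv, hC2def]
    have hJl : 0 ≤ ℓ⁻¹ * J t := by positivity
    have hJE : 0 ≤ E₀ * J t := mul_nonneg hE0nn hJnn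
    have hdiv : 2 / ℓ = 2 * ℓ⁻¹ := by ring
    rw [hdiv]
    nlinarith [hA_le, hS2fin, hJl, hJE]
  have key' : ∀ s : ℝ, 0 ≤ s → (s : EReal) < T → Iv s ≤ C2 * J s := by
    intro s hs0 hsT
    rcases lt_or_eq_of_le hs0 with hs0' | hs0'
    · exact key s hs0' hsT
    · -- s = 0 : pass to the limit from the right
      obtain ⟨c, hc0, hcT⟩ : ∃ c : ℝ, 0 < c ∧ (c : EReal) < T := by
        obtain ⟨b, hb0, hbT⟩ := exists_between hT
        have hbbot : b ≠ ⊥ := fun h => by simp [h] at hb0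
        have hbtop : b ≠ ⊤ := fun h => by
          rw [h] at hbT; exact (not_top_lt hbT)
        refine ⟨b.toReal, ?_, ?_⟩
        · have := EReal.coe_toReal hbtop hbbot
          rw [← EReal.coe_lt_coe_iff]
          rw [this]
          exact_mod_cast hb0
        · rw [EReal.coe_toReal hbtop hbbot]; exact hbT
      have hIvcont : Continuous Iv := by
        apply intervalIntegral.continuous_parametric_intervalIntegral_of_continuous'
          (f := fun s x => ‖PT ftilde s x‖^2)
        exact ((contDiff_PT hft).continuous).norm.pow 2
      have hJcont : Continuous J := by
        apply intervalIntegral.continuous_parametric_intervalIntegral_of_continuous'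
          (f := fun s x => ‖PT f s x‖^2 * ‖PX f s x‖)
        exact (((contDiff_PT hf).continuous).norm.pow 2).mul
          ((contDiff_PX hf).continuous).norm
      subst hs0'
      have hIvt : Filter.Tendsto Iv (nhdsWithin 0 (Set.Ioi 0)) (nhds (Iv 0)) :=
        (hIvcont.tendsto 0).mono_left nhdsWithin_le_nhds
      have hJt : Filter.Tendsto (fun r => C2 * J r) (nhdsWithin 0 (Set.Ioi 0))
          (nhds (C2 * J 0)) :=
        ((hJcont.tendsto 0).const_mul C2).mono_left nhdsWithin_le_nhds
      refine le_of_tendsto_of_tendsto hIvt hJt ?_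
      have hmem : Set.Ioo (0:ℝ) c ∈ nhdsWithin (0:ℝ) (Set.Ioi 0) :=
        Ioo_mem_nhdsGT_of_mem ⟨le_refl _, hc0⟩
      filter_upwards [hmem] with r hr
      refine key r hr.1 ?_
      calc (r : EReal) < (c : EReal) := by exact_mod_cast hr.2
        _ < T := hcT
  intro t ht0 htT
  have h1 : (∫ x in (0:ℝ)..1, ‖deriv (fun s => ftilde s x) t‖^2) = Iv t := by
    refine intervalIntegral.integral_congr (fun x _ => ?_)
    rw [deriv_PT hft]
  have h2 : (∫ x in (0:ℝ)..1, ‖deriv (fun s => f s x) t‖^2 * ‖deriv (f t) x‖) = J t := by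
    refine intervalIntegral.integral_congr (fun x _ => ?_)
    rw [deriv_PT hf, deriv_PX hf]
  rw [h1, h2, ← Real.sqrt_mul hC2nn]
  exact Real.sqrt_le_sqrt (key' t ht0 htT)
end

section
/- (Second variation of length in normal directions) Let f̄ : [0,1] → ℝ^d be a smooth immersed curve and let u be a smooth vector field along f̄ that is pointwise orthogonal to ∂ₓf̄. Then the derivative at u = 0 of the map u ↦ −P^⊥(κ_{f̄+u}·|∂ₓ(f̄+u)|) in direction u equals −(∇ₛ²u + ⟨u, κ⟩κ)|∂ₓf̄| + κ⟨u, κ⟩|∂ₓf̄|, i.e., (∇L)'(0)u = −|∂ₓf̄|·∇ₛ²u, a second-order differential operator in u. -/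
open MeasureTheory intervalIntegral
open scoped RealInnerProductSpace

variable {E : Type*} [NormedAddCommGroup E] [InnerProductSpace ℝ E]

lemma hasDerivAt_norm_comp {v : ℝ → E} {v' : E} {x : ℝ}
    (h : HasDerivAt v v' x) (hv : v x ≠ 0) :
    HasDerivAt (fun y => ‖v y‖) (⟪v', v x⟫ / ‖v x‖) x := by
  have h1 : HasDerivAt (fun y => ⟪v y, v y⟫) (⟪v x, v'⟫ + ⟪v', v x⟫) x := h.inner ℝ h
  have h3 : (⟪v x, v x⟫ : ℝ) ≠ 0 := by
    simpa [real_inner_self_eq_norm_sq, pow_eq_zero_iff] using norm_ne_zero_iff.mpr hv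
  have h4 := h1.sqrt h3
  have h5 : (fun y => Real.sqrt ⟪v y, v y⟫) = fun y => ‖v y‖ := by
    funext y
    rw [real_inner_self_eq_norm_sq, Real.sqrt_sq (norm_nonneg _)]
  rw [h5] at h4
  convert h4 using 1
  rw [real_inner_self_eq_norm_sq, Real.sqrt_sq (norm_nonneg _), real_inner_comm (v x) v']
  have : ‖v x‖ ≠ 0 := norm_ne_zero_iff.mpr hv
  field_simp
  ring

lemma hasDerivAt_invnorm_smul {v : ℝ → E} {v' : E} {x : ℝ}
    (h : HasDerivAt v v' x) (hv : v x ≠ 0) :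
    HasDerivAt (fun y => (‖v y‖)⁻¹ • v y)
      ((‖v x‖)⁻¹ • v' + (-(⟪v', v x⟫ / ‖v x‖) / ‖v x‖ ^ 2) • v x) x :=
  ((hasDerivAt_norm_comp h hv).inv (norm_ne_zero_iff.mpr hv)).smul h

set_option maxHeartbeats 2000000 in
theorem stmt16 {d : ℕ} (f u : ℝ → EuclideanSpace ℝ (Fin d))
    (hf : ContDiff ℝ (⊤ : ℕ∞) f) (hu : ContDiff ℝ (⊤ : ℕ∞) u)
    (himm : ∀ x : ℝ, deriv f x ≠ 0)
    (hperp : ∀ x : ℝ, ⟪u x, deriv f x⟫ = 0) :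
    ∀ x ∈ Set.Icc (0:ℝ) 1,
      deriv (fun t : ℝ =>
          -(((‖deriv (fun y => f y + t • u y) x‖) • curv (fun y => f y + t • u y) x)
            - ⟪(‖deriv (fun y => f y + t • u y) x‖) • curv (fun y => f y + t • u y) x,
                utang f x⟫ • utang f x)) 0
        = -(‖deriv f x‖) • (nablaS f (nablaS f u) x + ⟪u x, curv f x⟫ • curv f x)
            + (⟪u x, curv f x⟫ * ‖deriv f x‖) • curv f x ∧
      deriv (fun t : ℝ =>
          -(((‖deriv (fun y => f y + t • u y) x‖) • curv (fun y => f y + t • u y) x)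
            - ⟪(‖deriv (fun y => f y + t • u y) x‖) • curv (fun y => f y + t • u y) x,
                utang f x⟫ • utang f x)) 0
        = -(‖deriv f x‖) • nablaS f (nablaS f u) x := by
  intro x _
  have hfd : Differentiable ℝ f := hf.differentiable (by simp)
  have hud : Differentiable ℝ u := hu.differentiable (by simp)
  have hf' : ContDiff ℝ ((⊤:ℕ∞):WithTop ℕ∞) f := hf.of_le (by simp)
  have hu' : ContDiff ℝ ((⊤:ℕ∞):WithTop ℕ∞) u := hu.of_le (by simp)
  have hfd1 : Differentiable ℝ (deriv f) :=
    ((contDiff_infty_iff_deriv.mp hf').2).differentiable (by simp)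
  have hud1 : Differentiable ℝ (deriv u) :=
    ((contDiff_infty_iff_deriv.mp hu').2).differentiable (by simp)
  set a : EuclideanSpace ℝ (Fin d) := deriv f x with ha_def
  set b : EuclideanSpace ℝ (Fin d) := deriv u x with hb_def
  set a2 : EuclideanSpace ℝ (Fin d) := deriv (deriv f) x with ha2_def
  set b2 : EuclideanSpace ℝ (Fin d) := deriv (deriv u) x with hb2_def
  have ha : a ≠ 0 := himm x
  have hγ : ‖a‖ ≠ 0 := norm_ne_zero_iff.mpr ha
  set T : EuclideanSpace ℝ (Fin d) := utang f x with hT_def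
  -- derivative of y ↦ f y + t • u y
  have hder : ∀ t : ℝ, ∀ y : ℝ, deriv (fun y => f y + t • u y) y = deriv f y + t • deriv u y := by
    intro t y
    rw [deriv_fun_add (g := fun y => t • u y) (hfd y) ((hud y).const_smul t), deriv_fun_const_smul t (hud y)]
  -- the curve-family tangent component, explicitly
  set G : ℝ → EuclideanSpace ℝ (Fin d) := fun t =>
    (‖a + t • b‖)⁻¹ • (a2 + t • b2) +
      (-(⟪a2 + t • b2, a + t • b⟫ / ‖a + t • b‖) / ‖a + t • b‖ ^ 2) • (a + t • b) with hG_def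
  -- eventual identification
  have hev : ∀ᶠ t : ℝ in nhds 0, a + t • b ≠ 0 := by
    have hc : ContinuousAt (fun t : ℝ => a + t • b) 0 := by fun_prop
    have := hc.eventually_ne (by simpa using ha)
    simpa using this
  have hevEq : (fun t : ℝ =>
          -(((‖deriv (fun y => f y + t • u y) x‖) • curv (fun y => f y + t • u y) x)
            - ⟪(‖deriv (fun y => f y + t • u y) x‖) • curv (fun y => f y + t • u y) x,
                T⟫ • T))
      =ᶠ[nhds 0] (fun t : ℝ => -(G t - ⟪G t, T⟫ • T)) := by
    filter_upwards [hev] with t ht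
    have hvx : deriv (fun y => f y + t • u y) x = a + t • b := hder t x
    have hvd : HasDerivAt (fun y => deriv f y + t • deriv u y) (a2 + t • b2) x :=
      ((hfd1 x).hasDerivAt.add (((hud1 x).hasDerivAt).const_smul t))
    have hut : utang (fun y => f y + t • u y)
        = fun y => (‖deriv f y + t • deriv u y‖)⁻¹ • (deriv f y + t • deriv u y) := by
      funext y; rw [utang, hder t y]
    have hcv : (‖deriv (fun y => f y + t • u y) x‖) • curv (fun y => f y + t • u y) x = G t := by
      rw [curv, sderiv, hvx, smul_smul, mul_inv_cancel₀ (norm_ne_zero_iff.mpr ht), one_smul,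
        hut, (hasDerivAt_invnorm_smul hvd ht).deriv]
    rw [hcv]
  -- building blocks at t = 0
  have hq : HasDerivAt (fun t : ℝ => a + t • b) b 0 := by
    simpa using ((hasDerivAt_id (0:ℝ)).smul_const b).const_add a
  have hr : HasDerivAt (fun t : ℝ => a2 + t • b2) b2 0 := by
    simpa using ((hasDerivAt_id (0:ℝ)).smul_const b2).const_add a2
  have hv0 : (fun t : ℝ => a + t • b) 0 ≠ 0 := by simpa using ha
  have hn := hasDerivAt_norm_comp hq hv0
  have hninv := hn.inv (by simpa using hγ)
  have hp := hr.inner ℝ hq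
  have hc1 := ((hp.div hn (by simpa using hγ)).neg).div (hn.pow 2)
    (by simpa using pow_ne_zero 2 hγ)
  have hGa := (hninv.smul hr).add (hc1.smul hq)
  have hGT := (hGa.inner ℝ (hasDerivAt_const (0:ℝ) T)).smul_const T
  have hG2 := (hGa.sub hGT).neg
  simp only [hG_def] at hevEq
  have hφ := hG2.congr_of_eventuallyEq hevEq
  -- second-variation computation on the nablaS side
  have hfx : HasDerivAt (deriv f) a2 x := (hfd1 x).hasDerivAt
  have hux : HasDerivAt (deriv u) b2 x := (hud1 x).hasDerivAt
  have hnx := hasDerivAt_norm_comp hfx ha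
  have hTx := hasDerivAt_invnorm_smul hfx ha
  have hAx := (hnx.inv hγ).smul hux
  have hWx := hAx.sub ((hAx.inner ℝ hTx).smul hTx)
  have hWfun : nablaS f u = fun y => (‖deriv f y‖)⁻¹ • deriv u y -
      ⟪(‖deriv f y‖)⁻¹ • deriv u y, (‖deriv f y‖)⁻¹ • deriv f y⟫ •
        ((‖deriv f y‖)⁻¹ • deriv f y) := by
    funext y; simp [nablaS, sderiv, utang]
  have main2 : deriv (fun t : ℝ =>
          -(((‖deriv (fun y => f y + t • u y) x‖) • curv (fun y => f y + t • u y) x)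
            - ⟪(‖deriv (fun y => f y + t • u y) x‖) • curv (fun y => f y + t • u y) x,
                T⟫ • T)) 0
      = -(‖a‖ : ℝ) • nablaS f (nablaS f u) x := by
    rw [hφ.deriv]
    simp only [nablaS, sderiv, utang, hWfun]
    rw [show deriv (fun y => ‖deriv f y‖⁻¹ • deriv u y - ⟪‖deriv f y‖⁻¹ • deriv u y, ‖deriv f y‖⁻¹ • deriv f y⟫ • ‖deriv f y‖⁻¹ • deriv f y) x = _ from hWx.deriv]
    simp only [hT_def, utang, ← ha_def, ← hb_def, ← ha2_def, ← hb2_def, zero_smul, add_zero,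
      smul_zero, inner_zero_right, zero_add, Nat.cast_ofNat, pow_one, Pi.inv_apply, Pi.smul_apply',
      Pi.div_apply, Pi.pow_apply, Pi.sub_apply, Pi.neg_apply, Pi.add_apply]
    simp only [inner_add_left, inner_add_right, inner_sub_left, inner_sub_right,
      real_inner_smul_left, real_inner_smul_right, inner_neg_left, inner_neg_right,
      real_inner_self_eq_norm_sq, real_inner_comm a b, real_inner_comm a a2,
      real_inner_comm a b2, real_inner_comm b a2, real_inner_comm b b2,
      real_inner_comm a2 b2]
    match_scalars <;> field_simp <;> ring
  refine ⟨?_, main2⟩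
  rw [main2]
  simp only [nablaS]
  module
end
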